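/- arXiv:2412.21075 — 6 statements merged into one kernel-verified Lean document; each statement's English description precedes it below -/
import Mathlib

section
/- Let A = (a_n) and B = (b_n) be Waterman sequences such that b_n = o(a_n), i.e. lim_{n→∞} b_n/a_n = 0. If K ⊆ ABV is bounded in the norm ‖·‖_{ABV} and relatively compact with respect to the supremum norm ‖·‖_∞, then K ⊆ BBV and K is relatively compact in the norm ‖·‖_{BBV}. -/
open Filter Set
open scoped ENNReal

/-- A Waterman sequence: a nonincreasing sequence of positive reals whose series diverges. -/
def IsWaterman (a : ℕ → ℝ) : Prop :=
  Antitone a ∧ (∀ n, 0 < a n) ∧ ¬ Summable a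

/-- A Waterman sequence is proper if it moreover tends to zero. -/
def IsProperWaterman (a : ℕ → ℝ) : Prop :=
  IsWaterman a ∧ Tendsto a atTop (nhds 0)

/-- An admissible sequence of nonoverlapping closed subintervals `[s n, t n]` of `[0,1]`:
the intervals are contained in `[0,1]` and have pairwise disjoint interiors. -/
def Nonoverlapping (s t : ℕ → ℝ) : Prop :=
  (∀ n, 0 ≤ s n ∧ s n ≤ t n ∧ t n ≤ 1) ∧
  Pairwise fun m n => Disjoint (Set.Ioo (s m) (t m)) (Set.Ioo (s n) (t n))

/-- The `A`-variation (in the sense of Waterman) of `x` on `[0,1]`, with values in `[0,∞]`. -/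
noncomputable def eVar (a : ℕ → ℝ) (x : ℝ → ℝ) : ℝ≥0∞ :=
  ⨆ p : {p : (ℕ → ℝ) × (ℕ → ℝ) // Nonoverlapping p.1 p.2},
    ∑' n, ENNReal.ofReal (a n * |x (p.1.2 n) - x (p.1.1 n)|)

/-- Membership in the space `ABV` of functions of bounded `A`-variation. -/
def MemABV (a : ℕ → ℝ) (x : ℝ → ℝ) : Prop := eVar a x < ⊤

/-- The norm `‖x‖_{ABV} = |x(0)| + var_A(x)`, with values in `[0,∞]`. -/
noncomputable def eNormABV (a : ℕ → ℝ) (x : ℝ → ℝ) : ℝ≥0∞ :=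
  ENNReal.ofReal |x 0| + eVar a x

/-- The supremum norm of `x` on `[0,1]`, with values in `[0,∞]`. -/
noncomputable def eSupNorm (x : ℝ → ℝ) : ℝ≥0∞ :=
  ⨆ t ∈ Set.Icc (0 : ℝ) 1, ENNReal.ofReal |x t|

/-- `x` is bounded on `[0,1]`. -/
def BoundedOn01 (x : ℝ → ℝ) : Prop := ∃ C : ℝ, ∀ t ∈ Set.Icc (0 : ℝ) 1, |x t| ≤ C

/-- `K` is relatively compact with respect to the supremum norm on `[0,1]`: every sequence
in `K` has a subsequence converging in the supremum norm to some bounded function. -/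
def RelCompSup (K : Set (ℝ → ℝ)) : Prop :=
  ∀ u : ℕ → ℝ → ℝ, (∀ j, u j ∈ K) →
    ∃ φ : ℕ → ℕ, StrictMono φ ∧ ∃ x : ℝ → ℝ, BoundedOn01 x ∧
      Tendsto (fun k => eSupNorm (u (φ k) - x)) atTop (nhds 0)

/-- `K` is relatively compact in the norm of the space `BBV` (for the sequence `b`):
every sequence in `K` has a subsequence converging in `‖·‖_{BBV}` to an element of `BBV`. -/
def RelCompABV (b : ℕ → ℝ) (K : Set (ℝ → ℝ)) : Prop :=
  ∀ u : ℕ → ℝ → ℝ, (∀ j, u j ∈ K) →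
    ∃ φ : ℕ → ℕ, StrictMono φ ∧ ∃ x : ℝ → ℝ, MemABV b x ∧
      Tendsto (fun k => eNormABV b (u (φ k) - x)) atTop (nhds 0)

/-- `K` is a bounded subset of `ABV`. -/
def BddInABV (a : ℕ → ℝ) (K : Set (ℝ → ℝ)) : Prop :=
  ∃ M : ℝ≥0∞, M < ⊤ ∧ ∀ x ∈ K, eNormABV a x ≤ M

/-- `∑_{k=1}^n b_k = o(∑_{k=1}^n a_k)`. -/
def PartialSumsLittleO (a b : ℕ → ℝ) : Prop :=
  Tendsto (fun n => (∑ k ∈ Finset.range n, b k) / (∑ k ∈ Finset.range n, a k))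
    atTop (nhds 0)

/-- Condition (b): for every `ε > 0` there is `k₀` such that for every nonincreasing
nonnegative sequence `c` tending to `0` with `∑ aₙcₙ < ∞` one has
`∑_{n>k₀} bₙcₙ ≤ ε ∑ₙ aₙcₙ`. -/
def SmallTailCond (a b : ℕ → ℝ) : Prop :=
  ∀ ε : ℝ, 0 < ε → ∃ k₀ : ℕ, ∀ c : ℕ → ℝ,
    (∀ n, 0 ≤ c n) → Antitone c → Tendsto c atTop (nhds 0) →
    (∑' n, ENNReal.ofReal (a n * c n)) < ⊤ →
    (∑' n, ENNReal.ofReal (b (n + k₀) * c (n + k₀))) ≤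
      ENNReal.ofReal ε * ∑' n, ENNReal.ofReal (a n * c n)

/-- The compact-embedding property from `ABV` into `BBV`: every bounded subset of `ABV`
which is relatively compact in the supremum norm is contained in `BBV` and relatively
compact there. -/
def CompactEmbeddingABV (a b : ℕ → ℝ) : Prop :=
  ∀ K : Set (ℝ → ℝ), (∀ x ∈ K, MemABV a x) → BddInABV a K → RelCompSup K →
    (∀ x ∈ K, MemABV b x) ∧ RelCompABV b K

/-- The summable ideal `I_A = {C ⊆ ℕ : ∑_{n ∈ C} a_n < ∞}` (as a family of sets;
it may equal `P(ℕ)` when `∑ a_n < ∞`). -/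
def IdealOf (a : ℕ → ℝ) : Set (Set ℕ) := {C : Set ℕ | Summable fun n : C => a n}

/-- The Katětov order on families of subsets of `ℕ`. -/
def KatetovLE (I J : Set (Set ℕ)) : Prop :=
  ∃ f : ℕ → ℕ, ∀ C ∈ I, f ⁻¹' C ∈ J

/-- Given a sequence `b` and an increasing sequence `m` of naturals, the sequence `b^M`,
whose `n`-th term is `k·bₙ` where `k` is the number of indices `j` with `m j ≤ n`
(and `bₙ` itself if `n` is below all of `m`). -/
def seqM (b : ℕ → ℝ) (m : ℕ → ℕ) (n : ℕ) : ℝ :=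
  ((max 1 (((Finset.range (n + 1)).filter fun j => m j ≤ n).card) : ℕ) : ℝ) * b n

/-- An admissible `n`-tuple of nonoverlapping closed subintervals of `[0,1]`. -/
def NonoverlappingFin {n : ℕ} (s t : Fin n → ℝ) : Prop :=
  (∀ i, 0 ≤ s i ∧ s i ≤ t i ∧ t i ≤ 1) ∧
  Pairwise fun i j => Disjoint (Set.Ioo (s i) (t i)) (Set.Ioo (s j) (t j))

/-- The modulus of variation of Chanturia: `v(x,n)` is the supremum of `∑_{k=1}^n |x(I_k)|`
over all `n`-tuples of nonoverlapping closed subintervals of `[0,1]`. -/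
noncomputable def modVar (x : ℝ → ℝ) (n : ℕ) : ℝ≥0∞ :=
  ⨆ p : {p : (Fin n → ℝ) × (Fin n → ℝ) // NonoverlappingFin p.1 p.2},
    ENNReal.ofReal (∑ i, |x (p.1.2 i) - x (p.1.1 i)|)

/-- Membership in the Chanturia class `V[g(n)]`: `x` is bounded and `v(x,n) = O(g(n))`. -/
def MemChanturia (g : ℕ → ℝ) (x : ℝ → ℝ) : Prop :=
  BoundedOn01 x ∧ ∃ η : ℝ, 0 < η ∧ ∀ n, modVar x n ≤ ENNReal.ofReal (η * g n)

/-- The norm `‖x‖_{φ_g} = |x(0)| + sup_n v(x,n)/g(n)` of the Chanturia class. -/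
noncomputable def eNormChan (g : ℕ → ℝ) (x : ℝ → ℝ) : ℝ≥0∞ :=
  ENNReal.ofReal |x 0| + ⨆ n, modVar x n / ENNReal.ofReal (g n)

/-- The family `𝒢`: positive, nondecreasing `g` tending to `∞` with `n/g(n)`
nondecreasing and tending to `∞`. -/
def MemG (g : ℕ → ℝ) : Prop :=
  (∀ n, 0 < g n) ∧ Monotone g ∧ Tendsto g atTop atTop ∧
  Monotone (fun n : ℕ => (n : ℝ) / g n) ∧ Tendsto (fun n : ℕ => (n : ℝ) / g n) atTop atTop

/-- `K` is a bounded subset of the Chanturia class `V[g(n)]`. -/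
def BddInChan (g : ℕ → ℝ) (K : Set (ℝ → ℝ)) : Prop :=
  ∃ M : ℝ≥0∞, M < ⊤ ∧ ∀ x ∈ K, eNormChan g x ≤ M

/-- `K` is relatively compact in the norm of the Chanturia class `V[h(n)]`. -/
def RelCompChan (h : ℕ → ℝ) (K : Set (ℝ → ℝ)) : Prop :=
  ∀ u : ℕ → ℝ → ℝ, (∀ j, u j ∈ K) →
    ∃ φ : ℕ → ℕ, StrictMono φ ∧ ∃ x : ℝ → ℝ, MemChanturia h x ∧
      Tendsto (fun k => eNormChan h (u (φ k) - x)) atTop (nhds 0)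

/-- The compact-embedding property from `V[g(n)]` into `V[h(n)]`. -/
def CompactEmbeddingChan (g h : ℕ → ℝ) : Prop :=
  ∀ K : Set (ℝ → ℝ), (∀ x ∈ K, MemChanturia g x) → BddInChan g K → RelCompSup K →
    (∀ x ∈ K, MemChanturia h x) ∧ RelCompChan h K

/-- The submeasure `φ_g(C) = sup_n |C ∩ {0,…,n}| / g(n)`, with values in `[0,∞]`. -/
noncomputable def phiSub (g : ℕ → ℝ) (C : Set ℕ) : ℝ≥0∞ :=
  ⨆ n, ENNReal.ofReal (((C ∩ Set.Iic n).ncard : ℝ) / g n)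

/-- The exhaustive ideal `Exh(φ_g)`. -/
def Exh (g : ℕ → ℝ) : Set (Set ℕ) :=
  {C : Set ℕ | Tendsto (fun k => phiSub g (C \ Set.Iic k)) atTop (nhds 0)}

/-- The characteristic function of `[0,t]`. -/
noncomputable def chi (t : ℝ) : ℝ → ℝ := Set.indicator (Set.Icc 0 t) fun _ => 1

/-! Since `bₙ/aₙ` is bounded, `var_B ≤ C·var_A`, so `K ⊆ BBV`. Let `var_A ≤ M` on `K`. Given a
sequence in `K`, take a subsequence `uₖ → x` uniformly; `var_A` is lower semicontinuous under
pointwise convergence, so `var_A(x) ≤ M` and `var_A(uₖ - x) ≤ 2M`. For `ε > 0` pick `N` with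
`bₙ ≤ ε aₙ` for `n ≥ N`: the first `N` terms of a `B`-variation sum of `y` are at most
`2‖y‖_∞ ∑_{n<N} bₙ` and the rest at most `ε var_A(y)`, whence
`‖uₖ - x‖_{BBV} ≤ (1 + 2∑_{n<N} bₙ)‖uₖ - x‖_∞ + 2εM`. -/

lemma mem_Icc_of_nonoverlapping {s t : ℕ → ℝ} (h : Nonoverlapping s t) (n : ℕ) :
    s n ∈ Icc (0 : ℝ) 1 ∧ t n ∈ Icc (0 : ℝ) 1 := by
  obtain ⟨h0, hst, h1⟩ := h.1 n
  exact ⟨⟨h0, hst.trans h1⟩, ⟨h0.trans hst, h1⟩⟩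

lemma ofReal_abs_le_eSupNorm (y : ℝ → ℝ) {t : ℝ} (ht : t ∈ Icc (0 : ℝ) 1) :
    ENNReal.ofReal |y t| ≤ eSupNorm y :=
  le_biSup (fun t => ENNReal.ofReal |y t|) ht

lemma ofReal_abs_sub_le_two_mul_eSupNorm (y : ℝ → ℝ) {s t : ℝ} (hs : s ∈ Icc (0 : ℝ) 1)
    (ht : t ∈ Icc (0 : ℝ) 1) : ENNReal.ofReal |y t - y s| ≤ 2 * eSupNorm y :=
  calc ENNReal.ofReal |y t - y s|
      ≤ ENNReal.ofReal (|y t| + |y s|) := ENNReal.ofReal_le_ofReal (abs_sub _ _)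
    _ = ENNReal.ofReal |y t| + ENNReal.ofReal |y s| :=
        ENNReal.ofReal_add (abs_nonneg _) (abs_nonneg _)
    _ ≤ eSupNorm y + eSupNorm y :=
        add_le_add (ofReal_abs_le_eSupNorm y ht) (ofReal_abs_le_eSupNorm y hs)
    _ = 2 * eSupNorm y := (two_mul _).symm

lemma tendsto_apply_of_tendsto_eSupNorm {ι : Type*} {l : Filter ι} {u : ι → ℝ → ℝ}
    {x : ℝ → ℝ} (h : Tendsto (fun k => eSupNorm (u k - x)) l (nhds 0)) {t : ℝ}
    (ht : t ∈ Icc (0 : ℝ) 1) : Tendsto (fun k => u k t) l (nhds (x t)) := by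
  have hofReal : Tendsto (fun k => ENNReal.ofReal |u k t - x t|) l (nhds 0) :=
    tendsto_of_tendsto_of_tendsto_of_le_of_le tendsto_const_nhds h (fun _ => bot_le)
      fun k => ofReal_abs_le_eSupNorm (u k - x) ht
  rw [tendsto_iff_norm_sub_tendsto_zero]
  simpa [Function.comp_def] using (ENNReal.tendsto_toReal ENNReal.zero_ne_top).comp hofReal

lemma exists_nonneg_le_mul_of_tendsto_div {a b : ℕ → ℝ} (ha : ∀ n, 0 < a n) {c : ℝ}
    (h : Tendsto (fun n => b n / a n) atTop (nhds c)) : ∃ C, 0 ≤ C ∧ ∀ n, b n ≤ C * a n := by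
  obtain ⟨C, hC⟩ := h.bddAbove_range
  refine ⟨max C 0, le_max_right C 0, fun n => ?_⟩
  exact (div_le_iff₀ (ha n)).1 ((hC ⟨n, rfl⟩).trans (le_max_left C 0))

lemma eventually_le_mul_of_tendsto_div {ι : Type*} {l : Filter ι} {a b : ι → ℝ}
    (ha : ∀ n, 0 < a n) (h : Tendsto (fun n => b n / a n) l (nhds 0)) {ε : ℝ} (hε : 0 < ε) :
    ∀ᶠ n in l, b n ≤ ε * a n :=
  (h.eventually (gt_mem_nhds hε)).mono fun n hn => (div_le_iff₀ (ha n)).1 hn.le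

section eVar

variable {a b : ℕ → ℝ}

lemma tsum_le_eVar (a : ℕ → ℝ) (x : ℝ → ℝ) {s t : ℕ → ℝ} (h : Nonoverlapping s t) :
    ∑' n, ENNReal.ofReal (a n * |x (t n) - x (s n)|) ≤ eVar a x :=
  le_iSup (fun p : {p : (ℕ → ℝ) × (ℕ → ℝ) // Nonoverlapping p.1 p.2} =>
    ∑' n, ENNReal.ofReal (a n * |x (p.1.2 n) - x (p.1.1 n)|)) ⟨(s, t), h⟩

lemma eVar_le {x : ℝ → ℝ} {c : ℝ≥0∞}
    (h : ∀ s t, Nonoverlapping s t → ∑' n, ENNReal.ofReal (a n * |x (t n) - x (s n)|) ≤ c) :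
    eVar a x ≤ c :=
  iSup_le fun p => h p.1.1 p.1.2 p.2

lemma eVar_le_eNormABV (x : ℝ → ℝ) : eVar a x ≤ eNormABV a x := le_add_self

lemma eVar_le_ofReal_mul_eVar {C : ℝ} (hC : 0 ≤ C) (h : ∀ n, b n ≤ C * a n) (x : ℝ → ℝ) :
    eVar b x ≤ ENNReal.ofReal C * eVar a x := by
  refine eVar_le fun s t hst => ?_
  calc ∑' n, ENNReal.ofReal (b n * |x (t n) - x (s n)|)
      ≤ ∑' n, ENNReal.ofReal C * ENNReal.ofReal (a n * |x (t n) - x (s n)|) := by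
        refine ENNReal.tsum_le_tsum fun n => ?_
        rw [← ENNReal.ofReal_mul hC, ← mul_assoc]
        exact ENNReal.ofReal_le_ofReal (mul_le_mul_of_nonneg_right (h n) (abs_nonneg _))
    _ ≤ ENNReal.ofReal C * eVar a x := by
        rw [ENNReal.tsum_mul_left]
        gcongr
        exact tsum_le_eVar a x hst

lemma eVar_sub_le (ha : ∀ n, 0 ≤ a n) (y z : ℝ → ℝ) :
    eVar a (y - z) ≤ eVar a y + eVar a z := by
  refine eVar_le fun s t hst => ?_
  calc ∑' n, ENNReal.ofReal (a n * |(y - z) (t n) - (y - z) (s n)|)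
      ≤ ∑' n, (ENNReal.ofReal (a n * |y (t n) - y (s n)|)
          + ENNReal.ofReal (a n * |z (t n) - z (s n)|)) := by
        refine ENNReal.tsum_le_tsum fun n => ?_
        rw [← ENNReal.ofReal_add (mul_nonneg (ha n) (abs_nonneg _))
          (mul_nonneg (ha n) (abs_nonneg _)), ← mul_add]
        refine ENNReal.ofReal_le_ofReal (mul_le_mul_of_nonneg_left ?_ (ha n))
        calc |(y - z) (t n) - (y - z) (s n)|
            = |(y (t n) - y (s n)) - (z (t n) - z (s n))| := by
              simp only [Pi.sub_apply]; congr 1; ring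
          _ ≤ _ := abs_sub _ _
    _ = _ := ENNReal.tsum_add
    _ ≤ eVar a y + eVar a z := add_le_add (tsum_le_eVar a y hst) (tsum_le_eVar a z hst)

lemma eVar_le_of_tendsto_apply {ι : Type*} {l : Filter ι} [l.NeBot] {u : ι → ℝ → ℝ}
    {x : ℝ → ℝ} {M : ℝ≥0∞} (hu : ∀ t ∈ Icc (0 : ℝ) 1, Tendsto (fun k => u k t) l (nhds (x t)))
    (hM : ∀ k, eVar a (u k) ≤ M) : eVar a x ≤ M := by
  refine eVar_le fun s t hst => ?_
  rw [ENNReal.tsum_eq_iSup_sum]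
  refine iSup_le fun F => ?_
  have hlim : Tendsto (fun k => ∑ n ∈ F, ENNReal.ofReal (a n * |u k (t n) - u k (s n)|)) l
      (nhds (∑ n ∈ F, ENNReal.ofReal (a n * |x (t n) - x (s n)|))) :=
    tendsto_finsetSum _ fun n _ => ENNReal.tendsto_ofReal
      ((((hu _ (mem_Icc_of_nonoverlapping hst n).2).sub
        (hu _ (mem_Icc_of_nonoverlapping hst n).1)).abs).const_mul _)
  exact le_of_tendsto' hlim fun k =>
    (ENNReal.sum_le_tsum F).trans ((tsum_le_eVar a (u k) hst).trans (hM k))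

lemma eVar_le_sum_mul_eSupNorm_add {ε : ℝ} (hε : 0 ≤ ε) {N : ℕ}
    (hN : ∀ n, N ≤ n → b n ≤ ε * a n) (y : ℝ → ℝ) :
    eVar b y ≤ (∑ n ∈ Finset.range N, ENNReal.ofReal (b n)) * (2 * eSupNorm y)
      + ENNReal.ofReal ε * eVar a y := by
  refine eVar_le fun s t hst => ?_
  set head : ℕ → ℝ≥0∞ :=
    (Finset.range N : Set ℕ).indicator fun n => ENNReal.ofReal (b n) * (2 * eSupNorm y)
  have hterm : ∀ n, ENNReal.ofReal (b n * |y (t n) - y (s n)|)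
      ≤ head n + ENNReal.ofReal ε * ENNReal.ofReal (a n * |y (t n) - y (s n)|) := by
    intro n
    simp only [head]
    by_cases hn : n < N
    · refine le_add_right ?_
      rw [Set.indicator_of_mem (by simpa using hn), ENNReal.ofReal_mul' (abs_nonneg _)]
      gcongr
      exact ofReal_abs_sub_le_two_mul_eSupNorm y
        (mem_Icc_of_nonoverlapping hst n).1 (mem_Icc_of_nonoverlapping hst n).2
    · rw [Set.indicator_of_notMem (by simpa using hn), zero_add, ← ENNReal.ofReal_mul hε,
        ← mul_assoc]
      exact ENNReal.ofReal_le_ofReal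
        (mul_le_mul_of_nonneg_right (hN n (not_lt.1 hn)) (abs_nonneg _))
  calc ∑' n, ENNReal.ofReal (b n * |y (t n) - y (s n)|)
      ≤ ∑' n, head n + ∑' n, ENNReal.ofReal ε * ENNReal.ofReal (a n * |y (t n) - y (s n)|) :=
        (ENNReal.tsum_le_tsum hterm).trans_eq ENNReal.tsum_add
    _ ≤ (∑ n ∈ Finset.range N, ENNReal.ofReal (b n)) * (2 * eSupNorm y)
          + ENNReal.ofReal ε * eVar a y := by
        rw [← sum_eq_tsum_indicator, ← Finset.sum_mul, ENNReal.tsum_mul_left]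
        gcongr
        exact tsum_le_eVar a y hst

lemma eNormABV_le_mul_eSupNorm_add {ε : ℝ} (hε : 0 ≤ ε) {N : ℕ}
    (hN : ∀ n, N ≤ n → b n ≤ ε * a n) (y : ℝ → ℝ) :
    eNormABV b y ≤ (1 + 2 * ∑ n ∈ Finset.range N, ENNReal.ofReal (b n)) * eSupNorm y
      + ENNReal.ofReal ε * eVar a y :=
  calc eNormABV b y
      ≤ eSupNorm y + ((∑ n ∈ Finset.range N, ENNReal.ofReal (b n)) * (2 * eSupNorm y)
          + ENNReal.ofReal ε * eVar a y) :=
        add_le_add (ofReal_abs_le_eSupNorm y ⟨le_rfl, zero_le_one⟩)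
          (eVar_le_sum_mul_eSupNorm_add hε hN y)
    _ = _ := by ring

lemma tendsto_eNormABV_of_tendsto_eSupNorm {ι : Type*} {l : Filter ι}
    (hab : ∀ ε > 0, ∀ᶠ n in atTop, b n ≤ ε * a n) {y : ι → ℝ → ℝ} {M : ℝ≥0∞} (hM : M ≠ ⊤)
    (hvar : ∀ k, eVar a (y k) ≤ M) (hsup : Tendsto (fun k => eSupNorm (y k)) l (nhds 0)) :
    Tendsto (fun k => eNormABV b (y k)) l (nhds 0) := by
  refine ENNReal.tendsto_nhds_zero.2 fun η hη => ?_
  have hscale : Tendsto (fun ε : ℝ => ENNReal.ofReal ε * M) (nhdsWithin 0 (Ioi 0)) (nhds 0) := by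
    have hofReal : Tendsto ENNReal.ofReal (nhdsWithin 0 (Ioi 0)) (nhds (ENNReal.ofReal 0)) :=
      ENNReal.tendsto_ofReal (tendsto_nhdsWithin_of_tendsto_nhds tendsto_id)
    simpa using ENNReal.Tendsto.mul_const hofReal (Or.inr hM)
  obtain ⟨ε, hεM, hε⟩ :=
    ((hscale.eventually (gt_mem_nhds hη)).and self_mem_nhdsWithin).exists
  obtain ⟨N, hN⟩ := eventually_atTop.1 (hab ε hε)
  have hc : 1 + 2 * ∑ n ∈ Finset.range N, ENNReal.ofReal (b n) ≠ ⊤ :=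
    ENNReal.add_ne_top.2 ⟨ENNReal.one_ne_top, ENNReal.mul_ne_top ENNReal.ofNat_ne_top
      (ENNReal.sum_ne_top.2 fun _ _ => ENNReal.ofReal_ne_top)⟩
  set c := 1 + 2 * ∑ n ∈ Finset.range N, ENNReal.ofReal (b n)
  have hlim : Tendsto (fun k => c * eSupNorm (y k) + ENNReal.ofReal ε * M) l
      (nhds (ENNReal.ofReal ε * M)) := by
    simpa using (ENNReal.Tendsto.const_mul hsup (Or.inr hc)).add_const _
  filter_upwards [hlim.eventually (gt_mem_nhds hεM)] with k hk
  calc eNormABV b (y k) ≤ c * eSupNorm (y k) + ENNReal.ofReal ε * eVar a (y k) :=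
        eNormABV_le_mul_eSupNorm_add hε.le hN (y k)
    _ ≤ c * eSupNorm (y k) + ENNReal.ofReal ε * M := by gcongr; exact hvar k
    _ ≤ η := hk.le

end eVar

theorem stmt0_general (a b : ℕ → ℝ) (hA : IsWaterman a)
    (hsmall : Tendsto (fun n => b n / a n) atTop (nhds 0))
    (K : Set (ℝ → ℝ))
    (hKbdd : BddInABV a K) (hKcomp : RelCompSup K) :
    (∀ x ∈ K, MemABV b x) ∧ RelCompABV b K := by
  obtain ⟨-, ha, -⟩ := hA
  obtain ⟨C, hC, hbC⟩ := exists_nonneg_le_mul_of_tendsto_div ha hsmall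
  have memB : ∀ x, eVar a x < ⊤ → MemABV b x := fun x hx =>
    (eVar_le_ofReal_mul_eVar hC hbC x).trans_lt (ENNReal.mul_lt_top ENNReal.ofReal_lt_top hx)
  obtain ⟨M, hMtop, hMK⟩ := hKbdd
  have hvarK : ∀ x ∈ K, eVar a x ≤ M := fun x hx => (eVar_le_eNormABV x).trans (hMK x hx)
  refine ⟨fun x hx => memB x ((hvarK x hx).trans_lt hMtop), fun u hu => ?_⟩
  obtain ⟨φ, hφ, x, -, hconv⟩ := hKcomp u hu
  have hxM : eVar a x ≤ M := eVar_le_of_tendsto_apply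
    (fun t ht => tendsto_apply_of_tendsto_eSupNorm hconv ht) fun k => hvarK _ (hu (φ k))
  refine ⟨φ, hφ, x, memB x (hxM.trans_lt hMtop), ?_⟩
  exact tendsto_eNormABV_of_tendsto_eSupNorm
    (fun ε hε => eventually_le_mul_of_tendsto_div ha hsmall hε) (by finiteness)
    (fun k => (eVar_sub_le (fun n => (ha n).le) _ _).trans (add_le_add (hvarK _ (hu _)) hxM))
    hconv

/-- If `A`, `B` are Waterman sequences with `bₙ = o(aₙ)`, then every
bounded subset of `ABV` which is relatively compact in the supremum norm is contained
in `BBV` and relatively compact there. -/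
theorem stmt0 (a b : ℕ → ℝ) (hA : IsWaterman a) (hB : IsWaterman b)
    (hsmall : Tendsto (fun n => b n / a n) atTop (nhds 0))
    (K : Set (ℝ → ℝ)) (hKmem : ∀ x ∈ K, MemABV a x)
    (hKbdd : BddInABV a K) (hKcomp : RelCompSup K) :
    (∀ x ∈ K, MemABV b x) ∧ RelCompABV b K :=
  stmt0_general a b hA hsmall K hKbdd hKcomp
end

section
/- Let A = (a_n) and B = (b_n) be Waterman sequences with B proper. The following are equivalent: (a) ∑_{k=1}^n b_k = o(∑_{k=1}^n a_k), i.e. lim_{n→∞} (∑_{k=1}^n b_k)/(∑_{k=1}^n a_k) = 0; (b) for every ε > 0 there exists k₀ ∈ ℕ such that for every nonincreasing sequence (c_n) of nonnegative real numbers with c_n → 0 and ∑_{n=1}^∞ a_n c_n < ∞, one has ∑_{n=k₀+1}^∞ b_n c_n ≤ ε · ∑_{n=1}^∞ a_n c_n. -/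
open Filter Set
open scoped ENNReal

/-- For Waterman sequences `A`, `B` with `B` proper, the partial sums of
`B` are `o` of the partial sums of `A` iff the small-tail condition holds. -/
theorem stmt1 (a b : ℕ → ℝ) (hA : IsWaterman a) (hB : IsProperWaterman b) :
    PartialSumsLittleO a b ↔ SmallTailCond a b := by
  obtain ⟨haAnti, haPos, haNS⟩ := hA
  obtain ⟨⟨hbAnti, hbPos, hbNS⟩, hb0⟩ := hB
  set A : ℕ → ℝ := fun n => ∑ k ∈ Finset.range n, a k with hAdef
  set B : ℕ → ℝ := fun n => ∑ k ∈ Finset.range n, b k with hBdef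
  have hApos : ∀ n, 1 ≤ n → 0 < A n := fun n hn =>
    Finset.sum_pos (fun i _ => haPos i) (Finset.nonempty_range_iff.mpr (by omega))
  have hBnn : ∀ n, 0 ≤ B n := fun n =>
    Finset.sum_nonneg fun i _ => (hbPos i).le
  have hAtop : Tendsto A atTop atTop :=
    (not_summable_iff_tendsto_nat_atTop_of_nonneg (fun n => (haPos n).le)).mp haNS
  constructor
  · -- (a) → (b)
    intro h ε hε
    obtain ⟨N, hN⟩ := eventually_atTop.mp (h.eventually (gt_mem_nhds hε))
    refine ⟨max N 1, ?_⟩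
    set k₀ := max N 1 with hk₀def
    have hk₀ : ∀ n, k₀ ≤ n → B n ≤ ε * A n := by
      intro n hn
      have h1 : 1 ≤ n := le_trans (le_max_right N 1) hn
      have := hN n (le_trans (le_max_left N 1) hn)
      have := (div_lt_iff₀ (hApos n h1)).mp this
      linarith
    intro c hcnn hcanti hc0 hfin
    -- key inductive bound
    have key : ∀ M, ∑ n ∈ Finset.range M, b (k₀ + n) * c (k₀ + n) ≤
        ε * ∑ n ∈ Finset.range M, a (k₀ + n) * c (k₀ + n)
        + (B (k₀ + M) - ε * A (k₀ + M)) * c (k₀ + M)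
        + (ε * A k₀ - B k₀) * c k₀ := by
      intro M
      induction M with
      | zero => simp; ring_nf; simp
      | succ M ih =>
        rw [Finset.sum_range_succ, Finset.sum_range_succ]
        have hB1 : B (k₀ + M + 1) = B (k₀ + M) + b (k₀ + M) :=
          Finset.sum_range_succ b (k₀ + M)
        have hA1 : A (k₀ + M + 1) = A (k₀ + M) + a (k₀ + M) :=
          Finset.sum_range_succ a (k₀ + M)
        have hnonpos : B (k₀ + M + 1) - ε * A (k₀ + M + 1) ≤ 0 := by
          have := hk₀ (k₀ + M + 1) (by omega)
          linarith
        have hmono : (B (k₀ + M + 1) - ε * A (k₀ + M + 1)) * c (k₀ + M) ≤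
            (B (k₀ + M + 1) - ε * A (k₀ + M + 1)) * c (k₀ + M + 1) :=
          mul_le_mul_of_nonpos_left (hcanti (by omega)) hnonpos
        have e1 : k₀ + (M + 1) = k₀ + M + 1 := by omega
        rw [e1]
        have expand : (B (k₀ + M) - ε * A (k₀ + M)) * c (k₀ + M) + b (k₀ + M) * c (k₀ + M) =
            (B (k₀ + M + 1) - ε * A (k₀ + M + 1)) * c (k₀ + M) + ε * (a (k₀ + M) * c (k₀ + M)) := by
          rw [hB1, hA1]; ring
        linarith [ih, hmono, expand]
    have bound : ∀ M, ∑ n ∈ Finset.range M, b (k₀ + n) * c (k₀ + n) ≤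
        ε * ∑ n ∈ Finset.range (k₀ + M), a n * c n := by
      intro M
      have h1 : (B (k₀ + M) - ε * A (k₀ + M)) * c (k₀ + M) ≤ 0 := by
        have := hk₀ (k₀ + M) (by omega)
        exact mul_nonpos_of_nonpos_of_nonneg (by linarith) (hcnn _)
      have h2 : (ε * A k₀ - B k₀) * c k₀ ≤ ε * ∑ n ∈ Finset.range k₀, a n * c n := by
        have h3 : A k₀ * c k₀ ≤ ∑ n ∈ Finset.range k₀, a n * c n := by
          rw [hAdef]
          rw [Finset.sum_mul]
          apply Finset.sum_le_sum
          intro i hi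
          exact mul_le_mul_of_nonneg_left (hcanti (le_of_lt (Finset.mem_range.mp hi))) (haPos i).le
        have h4 : (ε * A k₀ - B k₀) * c k₀ ≤ ε * (A k₀ * c k₀) := by
          have := mul_nonneg (hBnn k₀) (hcnn k₀)
          nlinarith
        nlinarith [hε.le]
      have h5 : ∑ n ∈ Finset.range (k₀ + M), a n * c n =
          ∑ n ∈ Finset.range k₀, a n * c n + ∑ n ∈ Finset.range M, a (k₀ + n) * c (k₀ + n) :=
        Finset.sum_range_add (fun n => a n * c n) k₀ M
      have := key M
      rw [h5]
      nlinarith [hε.le]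
    rw [ENNReal.tsum_eq_iSup_nat]
    apply iSup_le
    intro M
    have nn : ∀ n ∈ Finset.range M, 0 ≤ b (n + k₀) * c (n + k₀) :=
      fun n _ => mul_nonneg (hbPos _).le (hcnn _)
    calc ∑ n ∈ Finset.range M, ENNReal.ofReal (b (n + k₀) * c (n + k₀))
        = ENNReal.ofReal (∑ n ∈ Finset.range M, b (n + k₀) * c (n + k₀)) :=
          (ENNReal.ofReal_sum_of_nonneg nn).symm
      _ ≤ ENNReal.ofReal (ε * ∑ n ∈ Finset.range (k₀ + M), a n * c n) := by
          apply ENNReal.ofReal_le_ofReal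
          have := bound M
          simpa [add_comm] using this
      _ = ENNReal.ofReal ε * ENNReal.ofReal (∑ n ∈ Finset.range (k₀ + M), a n * c n) :=
          ENNReal.ofReal_mul hε.le
      _ ≤ ENNReal.ofReal ε * ∑' n, ENNReal.ofReal (a n * c n) := by
          apply mul_le_mul_right
          rw [ENNReal.ofReal_sum_of_nonneg (fun n _ => mul_nonneg (haPos _).le (hcnn _))]
          exact ENNReal.sum_le_tsum _
  · -- (b) → (a)
    intro h
    rw [PartialSumsLittleO, Metric.tendsto_atTop]
    intro ε hε
    obtain ⟨k₀, H⟩ := h (ε / 2) (half_pos hε)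
    -- key: for m ≥ k₀, B m - B k₀ ≤ ε/2 * A m
    have key : ∀ m, k₀ ≤ m → B m - B k₀ ≤ ε / 2 * A m := by
      intro m hm
      set c : ℕ → ℝ := fun n => if n < m then (1 : ℝ) else 0 with hcdef
      have hcnn : ∀ n, 0 ≤ c n := by
        intro n; simp only [hcdef]; split <;> norm_num
      have hcanti : Antitone c := by
        intro i j hij
        simp only [hcdef]
        split_ifs with h1 h2
        · norm_num
        · exact absurd hij (by omega)
        · norm_num
        · norm_num
      have hc0 : Tendsto c atTop (nhds 0) := by
        apply Tendsto.congr' _ tendsto_const_nhds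
        filter_upwards [eventually_ge_atTop m] with n hn
        simp [hcdef, Nat.not_lt.mpr hn]
      have hsumA : ∑' n, ENNReal.ofReal (a n * c n) = ENNReal.ofReal (A m) := by
        rw [tsum_eq_sum (s := Finset.range m)
          (by intro n hn; simp [hcdef, Finset.mem_range.not.mp hn])]
        rw [ENNReal.ofReal_sum_of_nonneg (fun n _ => mul_nonneg (haPos _).le (hcnn _)) |>.symm]
        congr 1
        apply Finset.sum_congr rfl
        intro i hi
        simp [hcdef, Finset.mem_range.mp hi]
      have hfin : (∑' n, ENNReal.ofReal (a n * c n)) < ⊤ := by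
        rw [hsumA]; exact ENNReal.ofReal_lt_top
      have := H c hcnn hcanti hc0 hfin
      rw [hsumA] at this
      have hsumB : ∑' n, ENNReal.ofReal (b (n + k₀) * c (n + k₀)) =
          ENNReal.ofReal (∑ i ∈ Finset.Ico k₀ m, b i) := by
        rw [tsum_eq_sum (s := Finset.range (m - k₀))
          (by intro n hn
              have : ¬ n + k₀ < m := by
                have := Finset.mem_range.not.mp hn; omega
              simp [hcdef, this])]
        rw [Finset.sum_Ico_eq_sum_range]
        rw [ENNReal.ofReal_sum_of_nonneg
          (fun n _ => mul_nonneg (hbPos _).le (hcnn _)) |>.symm]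
        congr 1
        apply Finset.sum_congr rfl
        intro i hi
        have hilt : i + k₀ < m := by
          have := Finset.mem_range.mp hi; omega
        rw [show k₀ + i = i + k₀ from by omega]
        simp [hcdef, hilt]
      rw [hsumB, ← ENNReal.ofReal_mul (by linarith)] at this
      have h2 : ∑ i ∈ Finset.Ico k₀ m, b i ≤ ε / 2 * A m := by
        have hnn : (0 : ℝ) ≤ ε / 2 * A m := by
          rcases Nat.eq_zero_or_pos m with hm0 | hm1
          · simp [hAdef, hm0]
          · exact mul_nonneg (by linarith) (hApos m hm1).le
        exact (ENNReal.ofReal_le_ofReal_iff hnn).mp this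
      rw [Finset.sum_Ico_eq_sub b hm] at h2
      exact h2
    obtain ⟨N₁, hN₁⟩ := eventually_atTop.mp (hAtop.eventually_gt_atTop (2 * B k₀ / ε))
    refine ⟨max (max N₁ k₀) 1, ?_⟩
    intro n hn
    have h1 : 1 ≤ n := le_trans (le_max_right _ 1) hn
    have hApos' := hApos n h1
    have hAn := hN₁ n (le_trans (le_max_of_le_left (le_max_left _ _)) hn)
    have hBk : B k₀ < ε / 2 * A n := by
      have : 2 * B k₀ / ε < A n := hAn
      rw [div_lt_iff₀ hε] at this
      linarith
    have hkey := key n (le_trans (le_max_of_le_left (le_max_right _ _)) hn)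
    have hBlt : B n < ε * A n := by linarith
    rw [Real.dist_eq, sub_zero, abs_of_nonneg (div_nonneg (hBnn n) hApos'.le)]
    exact (div_lt_iff₀ hApos').mpr hBlt
end

section
/- Let A = (a_n) and B = (b_n) be Waterman sequences with B proper. The following are equivalent: (a) I_A ≤_K I_{B^M} for some increasing sequence M = (m_k) of natural numbers; (b) ∑_{k=1}^n b_k = o(∑_{k=1}^n a_k), i.e. lim_{n→∞} (∑_{k=1}^n b_k)/(∑_{k=1}^n a_k) = 0. -/
open Filter Set
open scoped ENNReal

/-!
Write `S_A(n) = ∑_{k<n} a_k` and `b^M_n = μ_M(n) b_n`, where `μ_M(n)` counts the `m_j ≤ n`.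

(b) ⇒ (a): since `S_B = o(S_A)`, `M` can be chosen so sparse that `2 μ_M(n) S_B(n) ≤ S_A(n)`
for large `n`. Then the partial sums `E(n)` of `B^M` stay below `S_A(n)/2`, and sending `n` to
the `j` with `S_A(j) ≤ E(n) < S_A(j+1)` is a Katětov reduction: the fibre over `j` carries
`B^M`-mass at most `a_j` plus one term `b^M_n ≤ S_A(n)/(2n) ≤ a_j`.

(a) ⇒ (b): if `a_n` does not tend to `0`, then `S_A` grows linearly and Cesàro's theorem applied
to `b_n → 0` suffices. Otherwise a Katětov reduction `f` yields, by a diagonal argument over sets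
of `A`-mass `2^{-k}`, constants `ε, K` such that every set of `A`-mass at most `ε` pulls back to
finite sets of `B^M`-mass at most `K`. Cutting sets into pieces of mass between `ε/2` and `ε`
gives `∑_{n<N} b^M_n ≤ c S_A(N) + C`, while `b^M_n ≥ R b_n` for `n ≥ m_R`; hence
`R S_B(N) ≤ c S_A(N) + C_R` for every `R`.
-/

lemma Antitone.mul_le_sum_range {a : ℕ → ℝ} (ha : Antitone a) (n : ℕ) :
    n * a n ≤ ∑ k ∈ Finset.range n, a k := by
  simpa using Finset.card_nsmul_le_sum (Finset.range n) a (a n)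
    fun k hk => ha (Finset.mem_range.mp hk).le

lemma Antitone.sum_range_le_add_mul {a : ℕ → ℝ} (ha : Antitone a) {j n : ℕ} (hjn : j ≤ n) :
    ∑ k ∈ Finset.range n, a k ≤ ∑ k ∈ Finset.range j, a k + (n - j : ℕ) * a j := by
  rw [← Finset.sum_range_add_sum_Ico a hjn]
  gcongr
  simpa using Finset.sum_le_card_nsmul (Finset.Ico j n) a (a j)
    fun k hk => ha (Finset.mem_Ico.mp hk).1

lemma Antitone.sum_le_sum_range_card {a : ℕ → ℝ} (ha : Antitone a) (s : Finset ℕ) :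
    ∑ j ∈ s, a j ≤ ∑ j ∈ Finset.range s.card, a j := by
  induction s using Finset.induction_on_max with
  | empty => simp
  | insert i s hlt ih =>
    have hi : i ∉ s := fun h => lt_irrefl i (hlt i h)
    have hcard : s.card ≤ i := by
      simpa using Finset.card_le_card fun x hx => Finset.mem_range.mpr (hlt x hx)
    rw [Finset.sum_insert hi, Finset.card_insert_of_notMem hi, Finset.sum_range_succ, add_comm]
    exact add_le_add ih (ha hcard)

/-- If `2 S(j) ≤ S(n)`, then `a_j, …, a_{n-1}` carry mass at least `S(n)/2`, so
`a_j ≥ S(n)/(2n)`. -/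
lemma Antitone.le_of_two_mul_sum_range_le {a : ℕ → ℝ} (ha : Antitone a) (ha0 : ∀ n, 0 ≤ a n)
    {j n : ℕ} (hn : 1 ≤ n) {x : ℝ}
    (hj : 2 * ∑ k ∈ Finset.range j, a k ≤ ∑ k ∈ Finset.range n, a k)
    (hx : 2 * n * x ≤ ∑ k ∈ Finset.range n, a k) : x ≤ a j := by
  have hn' : (1 : ℝ) ≤ n := by exact_mod_cast hn
  rcases le_or_gt j n with hjn | hnj
  · have h1 := ha.sum_range_le_add_mul hjn
    have h2 : ((n - j : ℕ) : ℝ) * a j ≤ n * a j :=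
      mul_le_mul_of_nonneg_right (by exact_mod_cast Nat.sub_le n j) (ha0 j)
    nlinarith
  · have h1 : ∑ k ∈ Finset.range n, a k ≤ ∑ k ∈ Finset.range j, a k :=
      Finset.sum_le_sum_of_subset_of_nonneg (Finset.range_mono hnj.le) fun k _ _ => ha0 k
    have h2 : 0 ≤ ∑ k ∈ Finset.range n, a k := Finset.sum_nonneg fun k _ => ha0 k
    nlinarith [ha0 j]

lemma tendsto_div_nhds_zero_of_forall_le_mul_add {u v : ℕ → ℝ} (hu : ∀ n, 0 ≤ u n)
    (hv : Tendsto v atTop atTop) (h : ∀ δ > 0, ∃ C, ∀ᶠ n in atTop, u n ≤ δ * v n + C) :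
    Tendsto (fun n => u n / v n) atTop (nhds 0) := by
  refine (Asymptotics.isLittleO_iff.2 fun δ hδ => ?_).tendsto_div_nhds_zero
  obtain ⟨C, hC⟩ := h (δ / 2) (half_pos hδ)
  filter_upwards [hC, hv.eventually_ge_atTop (2 * C / δ), hv.eventually_ge_atTop 0]
    with n hn hCv hv0
  rw [Real.norm_of_nonneg (hu n), Real.norm_of_nonneg hv0]
  rw [div_le_iff₀' hδ] at hCv
  linarith

lemma partialSumsLittleO_of_forall_le {a b : ℕ → ℝ} {L : ℝ} (hL : 0 < L) (haL : ∀ n, L ≤ a n)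
    (hb0 : ∀ n, 0 ≤ b n) (hb : Tendsto b atTop (nhds 0)) : PartialSumsLittleO a b := by
  have hSa : ∀ n : ℕ, n * L ≤ ∑ k ∈ Finset.range n, a k := fun n => by
    simpa using Finset.card_nsmul_le_sum (Finset.range n) a L fun k _ => haL k
  refine tendsto_div_nhds_zero_of_forall_le_mul_add (fun n => Finset.sum_nonneg fun k _ => hb0 k)
    (tendsto_atTop_mono hSa (tendsto_natCast_atTop_atTop.atTop_mul_const hL))
    fun δ hδ => ⟨0, ?_⟩
  filter_upwards [hb.cesaro.eventually (ge_mem_nhds (mul_pos hδ hL)), eventually_gt_atTop 0]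
    with n hn hn0
  have hn0' : (0 : ℝ) < n := by exact_mod_cast hn0
  rw [inv_mul_le_iff₀ hn0'] at hn
  nlinarith [hSa n]

lemma sum_le_tsum_of_mem_idealOf {a : ℕ → ℝ} (ha0 : ∀ n, 0 ≤ a n) {C : Set ℕ}
    (hC : C ∈ IdealOf a) {s : Finset ℕ} (hs : ∀ n ∈ s, n ∈ C) :
    ∑ n ∈ s, a n ≤ ∑' n : C, a n := by
  classical
  rw [← Finset.sum_subtype_of_mem a hs]
  exact hC.sum_le_tsum _ fun n _ => ha0 n

lemma mem_idealOf_of_forall_sum_le {a : ℕ → ℝ} (ha0 : ∀ n, 0 ≤ a n) {C : Set ℕ} {c : ℝ}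
    (h : ∀ s : Finset ℕ, (∀ n ∈ s, n ∈ C) → ∑ n ∈ s, a n ≤ c) : C ∈ IdealOf a := by
  refine summable_of_sum_le (c := c) (fun n => ha0 n) fun u => ?_
  refine (Finset.sum_map u (Function.Embedding.subtype _) a).symm.trans_le (h _ fun n hn => ?_)
  obtain ⟨x, -, rfl⟩ := Finset.mem_map.mp hn
  exact x.2

lemma iUnion_mem_idealOf {a : ℕ → ℝ} (ha0 : ∀ n, 0 ≤ a n) {F : ℕ → Finset ℕ}
    (hF : Summable fun k => ∑ j ∈ F k, a j) : (⋃ k, (F k : Set ℕ)) ∈ IdealOf a := by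
  have hfin : ∑' n : ⋃ k, (F k : Set ℕ), ENNReal.ofReal (a n) ≠ ⊤ := by
    refine ne_top_of_le_ne_top hF.tsum_ofReal_ne_top
      ((ENNReal.tsum_iUnion_le_tsum (fun n => ENNReal.ofReal (a n)) _).trans_eq
        (tsum_congr fun k => ?_))
    exact (Finset.tsum_subtype (F k) fun n => ENNReal.ofReal (a n)).trans
      (ENNReal.ofReal_sum_of_nonneg fun j _ => ha0 j).symm
  simpa [IdealOf, ENNReal.toReal_ofReal (ha0 _)] using ENNReal.summable_toReal hfin

def seqMFactor (m : ℕ → ℕ) (n : ℕ) : ℕ :=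
  max 1 ((Finset.range (n + 1)).filter fun j => m j ≤ n).card

lemma seqM_eq_seqMFactor_mul (b : ℕ → ℝ) (m : ℕ → ℕ) (n : ℕ) :
    seqM b m n = seqMFactor m n * b n := rfl

lemma seqMFactor_mono (m : ℕ → ℕ) : Monotone (seqMFactor m) := fun n n' h => by
  refine max_le_max le_rfl (Finset.card_le_card fun j => ?_)
  simp only [Finset.mem_filter, Finset.mem_range]
  omega

lemma le_seqMFactor {m : ℕ → ℕ} (hm : StrictMono m) {R n : ℕ} (h : m R ≤ n) :
    R + 1 ≤ seqMFactor m n := by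
  have hsub : Finset.range (R + 1) ⊆ (Finset.range (n + 1)).filter fun j => m j ≤ n := by
    intro j hj
    have hjR : j ≤ R := Nat.lt_succ_iff.mp (Finset.mem_range.mp hj)
    have := hm.monotone hjR
    have := hm.le_apply (x := j)
    simp only [Finset.mem_filter, Finset.mem_range]
    omega
  exact le_max_of_le_right (by simpa using Finset.card_le_card hsub)

lemma seqMFactor_le {m : ℕ → ℕ} (hm : StrictMono m) {k n : ℕ} (h : n < m (k + 1)) :
    seqMFactor m n ≤ k + 1 := by
  have hsub : ((Finset.range (n + 1)).filter fun j => m j ≤ n) ⊆ Finset.range (k + 1) :=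
    fun j hj => Finset.mem_range.mpr (hm.lt_iff_lt.mp ((Finset.mem_filter.mp hj).2.trans_lt h))
  exact max_le (by omega) (by simpa using Finset.card_le_card hsub)

lemma exists_strictMono_seqMFactor_mul_le {u : ℕ → ℝ} (hu0 : ∀ n, 0 ≤ u n)
    (hu : Tendsto u atTop (nhds 0)) {c : ℝ} (hc : 0 < c) :
    ∃ m : ℕ → ℕ, StrictMono m ∧ ∀ n, m 0 ≤ n → seqMFactor m n * u n ≤ c := by
  have hev : ∀ k : ℕ, ∃ N, ∀ N' ≥ N, ∀ n ≥ N', ((k + 1 : ℕ) : ℝ) * u n ≤ c := by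
    intro k
    have : Tendsto (fun n => ((k + 1 : ℕ) : ℝ) * u n) atTop (nhds 0) := by
      simpa using hu.const_mul ((k + 1 : ℕ) : ℝ)
    obtain ⟨N, hN⟩ := eventually_atTop.1 (this.eventually (eventually_le_nhds hc))
    exact ⟨N, fun N' hN' n hn => hN n (hN'.trans hn)⟩
  obtain ⟨m, hm, hmu⟩ := extraction_forall_of_eventually' hev
  refine ⟨m, hm, fun n hn => ?_⟩
  obtain ⟨k, hk, hk'⟩ :=
    hm.exists_between_of_tendsto_atTop hm.tendsto_atTop (Nat.lt_succ_of_le hn)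
  calc (seqMFactor m n : ℝ) * u n ≤ ((k + 1 : ℕ) : ℝ) * u n := by
        gcongr
        · exact hu0 n
        · exact seqMFactor_le hm (by omega)
    _ ≤ c := hmu k n (by omega)

lemma sum_le_of_forall_partialSum_mem {d : ℕ → ℝ} (hd : ∀ n, 0 ≤ d n) {s : Finset ℕ}
    (hs : s.Nonempty) {x y : ℝ}
    (h : ∀ n ∈ s, x ≤ ∑ k ∈ Finset.range n, d k ∧ ∑ k ∈ Finset.range n, d k < y) :
    ∑ n ∈ s, d n ≤ y - x + d (s.max' hs) := by
  set n₀ := s.min' hs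
  set n₁ := s.max' hs
  have hsub : s ⊆ Finset.Ico n₀ (n₁ + 1) := fun n hn =>
    Finset.mem_Ico.mpr ⟨s.min'_le n hn, Nat.lt_succ_of_le (s.le_max' n hn)⟩
  have h01 : n₀ ≤ n₁ + 1 := (s.min'_le n₁ (s.max'_mem hs)).trans n₁.le_succ
  calc ∑ n ∈ s, d n ≤ ∑ n ∈ Finset.Ico n₀ (n₁ + 1), d n :=
        Finset.sum_le_sum_of_subset_of_nonneg hsub fun n _ _ => hd n
    _ = ∑ k ∈ Finset.range n₁, d k + d n₁ - ∑ k ∈ Finset.range n₀, d k := by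
        rw [Finset.sum_Ico_eq_sub _ h01, Finset.sum_range_succ]
    _ ≤ y - x + d n₁ := by
        linarith [(h n₁ (s.max'_mem hs)).2, (h n₀ (s.min'_mem hs)).1]

lemma katetovLE_idealOf_of_sum_fiber_le {a d : ℕ → ℝ} (ha0 : ∀ n, 0 ≤ a n)
    (hd : ∀ n, 0 ≤ d n) (f : ℕ → ℕ) (N : ℕ) {c : ℝ} (hc : 0 ≤ c)
    (h : ∀ j (s : Finset ℕ), (∀ n ∈ s, N ≤ n ∧ f n = j) → ∑ n ∈ s, d n ≤ c * a j) :
    KatetovLE (IdealOf a) (IdealOf d) := by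
  classical
  refine ⟨f, fun C hC => mem_idealOf_of_forall_sum_le hd
    (c := ∑ n ∈ Finset.range N, d n + c * ∑' j : C, a j) fun s hs => ?_⟩
  rw [← Finset.sum_filter_add_sum_filter_not s (fun n => n < N)]
  gcongr ?_ + ?_
  · exact Finset.sum_le_sum_of_subset_of_nonneg
      (fun n hn => Finset.mem_range.mpr (Finset.mem_filter.mp hn).2) fun n _ _ => hd n
  · set s₂ := s.filter fun n => ¬ n < N
    have himage : ∀ j ∈ s₂.image f, j ∈ C := fun j hj => by
      obtain ⟨n, hn, rfl⟩ := Finset.mem_image.mp hj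
      exact hs n (Finset.mem_filter.mp hn).1
    rw [← Finset.sum_fiberwise_of_maps_to fun n hn => Finset.mem_image_of_mem f hn]
    calc _ ≤ ∑ j ∈ s₂.image f, c * a j := Finset.sum_le_sum fun j _ => h j _ fun n hn => by
            obtain ⟨hn₂, hfn⟩ := Finset.mem_filter.mp hn
            exact ⟨not_lt.mp (Finset.mem_filter.mp hn₂).2, hfn⟩
      _ = c * ∑ j ∈ s₂.image f, a j := (Finset.mul_sum _ _ _).symm
      _ ≤ c * ∑' j : C, a j := by gcongr; exact sum_le_tsum_of_mem_idealOf ha0 hC himage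

lemma katetovLE_idealOf_of_two_mul_le {a d : ℕ → ℝ} (ha : Antitone a) (ha0 : ∀ n, 0 ≤ a n)
    (hSa : Tendsto (fun n => ∑ k ∈ Finset.range n, a k) atTop atTop) (hd : ∀ n, 0 ≤ d n)
    {N : ℕ} (hE : ∀ n ≥ N, 2 * ∑ k ∈ Finset.range n, d k ≤ ∑ k ∈ Finset.range n, a k)
    (hdn : ∀ n ≥ N, 2 * n * d n ≤ ∑ k ∈ Finset.range n, a k) :
    KatetovLE (IdealOf a) (IdealOf d) := by
  classical
  have hex : ∀ n, ∃ j, ∑ k ∈ Finset.range n, d k < ∑ k ∈ Finset.range (j + 1), a k :=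
    fun n => (((tendsto_add_atTop_iff_nat 1).2 hSa).eventually_gt_atTop _).exists
  set f : ℕ → ℕ := fun n => Nat.find (hex n)
  have hf_lt : ∀ n, ∑ k ∈ Finset.range n, d k < ∑ k ∈ Finset.range (f n + 1), a k :=
    fun n => Nat.find_spec (hex n)
  have hf_le : ∀ n, ∑ k ∈ Finset.range (f n), a k ≤ ∑ k ∈ Finset.range n, d k := by
    intro n
    rcases hfn : f n with _ | j
    · simpa using Finset.sum_nonneg fun k _ => hd k
    · exact not_lt.mp (Nat.find_min (hex n) (show j < f n by omega))
  refine katetovLE_idealOf_of_sum_fiber_le ha0 hd f (max N 1) zero_le_two fun j s hs => ?_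
  rcases s.eq_empty_or_nonempty with rfl | hne
  · simpa using ha0 j
  have hfiber := sum_le_of_forall_partialSum_mem hd hne (x := ∑ k ∈ Finset.range j, a k)
    (y := ∑ k ∈ Finset.range (j + 1), a k) fun n hn => by
      rw [← (hs n hn).2]
      exact ⟨hf_le n, hf_lt n⟩
  obtain ⟨hN, hj⟩ := hs _ (s.max'_mem hne)
  have hlast : d (s.max' hne) ≤ a j := by
    refine ha.le_of_two_mul_sum_range_le ha0 (le_of_max_le_right hN) ?_
      (hdn _ (le_of_max_le_left hN))
    have := hE _ (le_of_max_le_left hN)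
    rw [← hj]
    linarith [hf_le (s.max' hne)]
  rw [Finset.sum_range_succ] at hfiber
  linarith

theorem exists_katetovLE_seqM_of_partialSumsLittleO {a b : ℕ → ℝ} (ha : Antitone a)
    (ha0 : ∀ n, 0 ≤ a n) (hSa : Tendsto (fun n => ∑ k ∈ Finset.range n, a k) atTop atTop)
    (hb : Antitone b) (hb0 : ∀ n, 0 ≤ b n) (h : PartialSumsLittleO a b) :
    ∃ m : ℕ → ℕ, StrictMono m ∧ KatetovLE (IdealOf a) (IdealOf (seqM b m)) := by
  obtain ⟨m, hm, hmu⟩ := exists_strictMono_seqMFactor_mul_le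
    (fun n => div_nonneg (Finset.sum_nonneg fun k _ => hb0 k) (Finset.sum_nonneg fun k _ => ha0 k))
    h one_half_pos
  obtain ⟨N, hN⟩ := eventually_atTop.1 (hSa.eventually_gt_atTop 0)
  have hkey : ∀ n ≥ max (m 0) N,
      2 * (seqMFactor m n * ∑ k ∈ Finset.range n, b k) ≤ ∑ k ∈ Finset.range n, a k := by
    intro n hn
    have := hmu n (le_of_max_le_left hn)
    rw [mul_div_assoc', div_le_iff₀ (hN n (le_of_max_le_right hn))] at this
    linarith
  refine ⟨m, hm, katetovLE_idealOf_of_two_mul_le ha ha0 hSa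
    (fun n => mul_nonneg (Nat.cast_nonneg _) (hb0 n)) (N := max (m 0) N) (fun n hn => ?_)
    fun n hn => ?_⟩
  · calc 2 * ∑ k ∈ Finset.range n, seqM b m k
          ≤ 2 * ∑ k ∈ Finset.range n, seqMFactor m n * b k := by
            gcongr with k hk
            rw [seqM_eq_seqMFactor_mul]
            gcongr
            · exact hb0 k
            · exact seqMFactor_mono m (Finset.mem_range.mp hk).le
        _ = 2 * (seqMFactor m n * ∑ k ∈ Finset.range n, b k) := by rw [← Finset.mul_sum]
        _ ≤ _ := hkey n hn
  · refine le_trans ?_ (hkey n hn)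
    rw [seqM_eq_seqMFactor_mul]
    have := hb.mul_le_sum_range n
    have : (0 : ℝ) ≤ seqMFactor m n := Nat.cast_nonneg _
    nlinarith

lemma exists_subset_sum_mem_Icc {ι : Type*} [DecidableEq ι] {a : ι → ℝ} {δ : ℝ} (hδ : 0 ≤ δ)
    (F : Finset ι) (hF : ∀ i ∈ F, a i ≤ δ) (h : δ ≤ ∑ i ∈ F, a i) :
    ∃ F₁ ⊆ F, δ ≤ ∑ i ∈ F₁, a i ∧ ∑ i ∈ F₁, a i ≤ 2 * δ := by
  induction F using Finset.induction_on with
  | empty => exact ⟨∅, subset_rfl, h, by simpa using hδ⟩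
  | insert x s hx ih =>
    by_cases hs : δ ≤ ∑ i ∈ s, a i
    · obtain ⟨F₁, hsub, h₁⟩ := ih (fun i hi => hF i (Finset.mem_insert_of_mem hi)) hs
      exact ⟨F₁, hsub.trans (Finset.subset_insert x s), h₁⟩
    · refine ⟨insert x s, subset_rfl, h, ?_⟩
      rw [Finset.sum_insert hx]
      linarith [hF x (Finset.mem_insert_self x s)]

/-- Cutting `F` into pieces of `a`-mass between `ε / 2` and `ε` upgrades a bound on sets of
small mass to a linear bound. -/
lemma sum_le_mul_sum_add_of_forall_sum_le {ι : Type*} [DecidableEq ι] {a g : ι → ℝ}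
    (ha0 : ∀ i, 0 ≤ a i) {ε K : ℝ} (hε : 0 < ε)
    (hK : ∀ F : Finset ι, ∑ i ∈ F, a i ≤ ε → ∑ i ∈ F, g i ≤ K) (F : Finset ι)
    (hF : ∀ i ∈ F, a i ≤ ε / 2) : ∑ i ∈ F, g i ≤ K * (2 / ε * ∑ i ∈ F, a i + 1) := by
  have hK0 : 0 ≤ K := by simpa using hK ∅ (by simpa using hε.le)
  induction F using Finset.strongInduction with | H F ih => ?_
  have hFa : 0 ≤ ∑ i ∈ F, a i := Finset.sum_nonneg fun i _ => ha0 i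
  by_cases hsmall : ∑ i ∈ F, a i ≤ ε
  · have : 0 ≤ K * (2 / ε * ∑ i ∈ F, a i) := by positivity
    nlinarith [hK F hsmall]
  obtain ⟨F₁, hsub, hlo, hhi⟩ := exists_subset_sum_mem_Icc (half_pos hε).le F hF (by linarith)
  have hne : F₁.Nonempty := Finset.nonempty_of_sum_ne_zero (f := a) (by linarith [half_pos hε])
  have hrest := ih (F \ F₁) (Finset.sdiff_ssubset hsub hne)
    fun i hi => hF i (Finset.mem_sdiff.mp hi).1
  have hpiece := hK F₁ (by linarith)
  have hK_le : K ≤ K * (2 / ε) * ∑ i ∈ F₁, a i := by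
    calc K = K * (2 / ε) * (ε / 2) := by field_simp
      _ ≤ K * (2 / ε) * ∑ i ∈ F₁, a i := by gcongr
  rw [← Finset.sum_sdiff hsub (f := g), ← Finset.sum_sdiff hsub (f := a)]
  nlinarith

lemma exists_sum_le_of_katetov {a d : ℕ → ℝ} (ha0 : ∀ n, 0 ≤ a n) (hd : ∀ n, 0 ≤ d n)
    {f : ℕ → ℕ} (hf : ∀ C ∈ IdealOf a, f ⁻¹' C ∈ IdealOf d) :
    ∃ ε > 0, ∃ K, ∀ F s : Finset ℕ,
      ∑ j ∈ F, a j ≤ ε → (∀ n ∈ s, f n ∈ F) → ∑ n ∈ s, d n ≤ K := by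
  by_contra! h
  choose F s hFa hsF hsd using fun k : ℕ => h ((1 / 2) ^ k) (by positivity) k
  have hU := hf _ (iUnion_mem_idealOf ha0 (summable_geometric_two.of_nonneg_of_le
    (fun k => Finset.sum_nonneg fun j _ => ha0 j) hFa))
  obtain ⟨k, hk⟩ := exists_nat_gt (∑' n : f ⁻¹' ⋃ k, (F k : Set ℕ), d n)
  have := sum_le_tsum_of_mem_idealOf hd hU (s := s k)
    fun n hn => Set.mem_iUnion.mpr ⟨k, hsF k n hn⟩
  linarith [hsd k]

lemma exists_sum_le_mul_sum_image_add {a d : ℕ → ℝ} (ha0 : ∀ n, 0 ≤ a n)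
    (ha : Tendsto a atTop (nhds 0)) (hd : ∀ n, 0 ≤ d n) {f : ℕ → ℕ}
    (hf : ∀ C ∈ IdealOf a, f ⁻¹' C ∈ IdealOf d) :
    ∃ c C : ℝ, 0 ≤ c ∧ ∀ s : Finset ℕ, ∑ n ∈ s, d n ≤ c * ∑ j ∈ s.image f, a j + C := by
  classical
  obtain ⟨ε, hε, K, hK⟩ := exists_sum_le_of_katetov ha0 hd hf
  have hK0 : 0 ≤ K := by simpa using hK ∅ ∅ (by simpa using hε.le) (by simp)
  obtain ⟨N, hN⟩ := eventually_atTop.1 (ha.eventually (eventually_le_nhds (half_pos hε)))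
  have hlow : f ⁻¹' (Finset.range N : Set ℕ) ∈ IdealOf d := hf _ Summable.of_finite
  refine ⟨K * (2 / ε), ∑' n : f ⁻¹' (Finset.range N : Set ℕ), d n + K, by positivity,
    fun s => ?_⟩
  rw [← Finset.sum_filter_add_sum_filter_not s (fun n => f n < N)]
  set s₂ := s.filter fun n => ¬ f n < N
  have h1 : ∑ n ∈ s with f n < N, d n ≤ ∑' n : f ⁻¹' (Finset.range N : Set ℕ), d n :=
    sum_le_tsum_of_mem_idealOf hd hlow fun n hn => by simpa using (Finset.mem_filter.mp hn).2
  have h2 : ∑ n ∈ s₂, d n ≤ K * (2 / ε * ∑ j ∈ s₂.image f, a j + 1) := by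
    rw [← Finset.sum_fiberwise_of_maps_to fun n hn => Finset.mem_image_of_mem f hn]
    refine sum_le_mul_sum_add_of_forall_sum_le ha0 hε (fun F hF => ?_) _ fun j hj => ?_
    · rw [Finset.sum_fiberwise_eq_sum_filter]
      exact hK F _ hF fun n hn => (Finset.mem_filter.mp hn).2
    · obtain ⟨n, hn, rfl⟩ := Finset.mem_image.mp hj
      exact hN _ (not_lt.mp (Finset.mem_filter.mp hn).2)
  have h3 : ∑ j ∈ s₂.image f, a j ≤ ∑ j ∈ s.image f, a j :=
    Finset.sum_le_sum_of_subset_of_nonneg (Finset.image_subset_image (Finset.filter_subset _ _))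
      fun j _ _ => ha0 j
  have h4 : K * (2 / ε) * ∑ j ∈ s₂.image f, a j ≤ K * (2 / ε) * ∑ j ∈ s.image f, a j := by
    gcongr
  linarith

lemma mul_sum_Ico_le_sum_range_seqM {b : ℕ → ℝ} (hb0 : ∀ n, 0 ≤ b n) {m : ℕ → ℕ}
    (hm : StrictMono m) (R N : ℕ) :
    R * ∑ n ∈ Finset.Ico (m R) N, b n ≤ ∑ n ∈ Finset.range N, seqM b m n := by
  rw [Finset.mul_sum]
  calc ∑ n ∈ Finset.Ico (m R) N, R * b n ≤ ∑ n ∈ Finset.Ico (m R) N, seqM b m n := by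
        gcongr with n hn
        rw [seqM_eq_seqMFactor_mul]
        gcongr
        · exact hb0 n
        · have := le_seqMFactor hm (Finset.mem_Ico.mp hn).1
          omega
    _ ≤ ∑ n ∈ Finset.range N, seqM b m n :=
        Finset.sum_le_sum_of_subset_of_nonneg
          (fun n hn => Finset.mem_range.mpr (Finset.mem_Ico.mp hn).2)
          fun n _ _ => mul_nonneg (Nat.cast_nonneg _) (hb0 n)

theorem partialSumsLittleO_of_katetovLE_seqM {a b : ℕ → ℝ} (ha : Antitone a)
    (ha0 : ∀ n, 0 ≤ a n) (hSa : Tendsto (fun n => ∑ k ∈ Finset.range n, a k) atTop atTop)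
    (hb0 : ∀ n, 0 ≤ b n) (hb : Tendsto b atTop (nhds 0)) {m : ℕ → ℕ} (hm : StrictMono m)
    (h : KatetovLE (IdealOf a) (IdealOf (seqM b m))) : PartialSumsLittleO a b := by
  have hbdd : BddBelow (Set.range a) := ⟨0, by rintro _ ⟨n, rfl⟩; exact ha0 n⟩
  have hlim := tendsto_atTop_ciInf ha hbdd
  rcases (le_ciInf ha0).lt_or_eq with hL | hL
  · exact partialSumsLittleO_of_forall_le hL (fun n => ciInf_le hbdd n) hb0 hb
  obtain ⟨f, hf⟩ := h
  obtain ⟨c, C, hc, hcC⟩ := exists_sum_le_mul_sum_image_add (d := seqM b m) ha0 (hL ▸ hlim)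
    (fun n => mul_nonneg (Nat.cast_nonneg _) (hb0 n)) hf
  refine tendsto_div_nhds_zero_of_forall_le_mul_add (fun n => Finset.sum_nonneg fun k _ => hb0 k)
    hSa fun δ hδ => ?_
  obtain ⟨R, hR⟩ := exists_nat_gt (c / δ)
  have hR0 : (0 : ℝ) < R := (div_nonneg hc hδ.le).trans_lt hR
  refine ⟨(C + R * ∑ k ∈ Finset.range (m R), b k) / R, eventually_atTop.2 ⟨m R, fun N hN => ?_⟩⟩
  have himage : ∑ j ∈ (Finset.range N).image f, a j ≤ ∑ k ∈ Finset.range N, a k :=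
    (ha.sum_le_sum_range_card _).trans (Finset.sum_le_sum_of_subset_of_nonneg
      (Finset.range_mono (Finset.card_image_le.trans (Finset.card_range N).le))
      fun k _ _ => ha0 k)
  have hup : ∑ n ∈ Finset.range N, seqM b m n ≤ c * ∑ k ∈ Finset.range N, a k + C :=
    (hcC (Finset.range N)).trans (by gcongr)
  have hlow := mul_sum_Ico_le_sum_range_seqM hb0 hm R N
  rw [Finset.sum_Ico_eq_sub _ hN] at hlow
  rw [div_lt_iff₀ hδ] at hR
  have hcR := mul_le_mul_of_nonneg_right hR.le
    (Finset.sum_nonneg fun k (_ : k ∈ Finset.range N) => ha0 k)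
  rw [← sub_le_iff_le_add', le_div_iff₀ hR0]
  nlinarith

/-- For Waterman sequences `A`, `B` with `B` proper:
`I_A ≤_K I_{B^M}` for some increasing `M` iff `∑_{k≤n} b_k = o(∑_{k≤n} a_k)`. -/
theorem stmt3 (a b : ℕ → ℝ) (hA : IsWaterman a) (hB : IsProperWaterman b) :
    (∃ m : ℕ → ℕ, StrictMono m ∧ KatetovLE (IdealOf a) (IdealOf (seqM b m))) ↔
      PartialSumsLittleO a b := by
  obtain ⟨ha, ha0, ha_sum⟩ := hA
  obtain ⟨⟨hb, hb0, -⟩, hb_lim⟩ := hB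
  have hSa := (not_summable_iff_tendsto_nat_atTop_of_nonneg fun n => (ha0 n).le).mp ha_sum
  exact ⟨fun ⟨_, hm, h⟩ => partialSumsLittleO_of_katetovLE_seqM ha (fun n => (ha0 n).le) hSa
      (fun n => (hb0 n).le) hb_lim hm h,
    exists_katetovLE_seqM_of_partialSumsLittleO ha (fun n => (ha0 n).le) hSa hb
      fun n => (hb0 n).le⟩
end

section
/- There exist Waterman sequences A = (a_n) and B = (b_n) with B proper such that ∑_{k=1}^n b_k = o(∑_{k=1}^n a_k) (i.e. lim_{n→∞} (∑_{k=1}^n b_k)/(∑_{k=1}^n a_k) = 0), while b_n = o(a_n) fails, i.e. b_n/a_n does not tend to 0. -/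
open Filter Set
open scoped ENNReal

/-!
Let `a` equal `2^(-l)` on the `l`-th dyadic block of indices, which has `2^l` elements, so
that every block contributes `1` to `∑ a` and `∑_{k<n} a_k ≈ log₂ n`. Let `b` be constant, equal
to `2^(-2^(m+1))`, on all blocks `l` with `⌊log₂ l⌋ = m`. The contributions `2^l · 2^(-2^(m+1))`
of these blocks to `∑ b` form a geometric series of sum at most `1`, so
`∑_{k<n} b_k = O(log log n)`. On the last block `l = 2^(m+1) - 1` of each run, however,
`b/a = 1/2`; this also makes `∑ b` diverge.
-/

open Finset Topology

section DyadicStep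

/-- `dyadicStep c` takes the value `c l` on the `l`-th dyadic block
`2^l - 1 ≤ n < 2^(l+1) - 1`. -/
noncomputable def dyadicStep (c : ℕ → ℝ) (n : ℕ) : ℝ := c (Nat.log 2 (n + 1))

variable {c : ℕ → ℝ}

lemma tendsto_log_two_succ_atTop : Tendsto (fun n => Nat.log 2 (n + 1)) atTop atTop :=
  (tendsto_atTop_atTop_of_monotone Nat.log_monotone fun L =>
    ⟨2 ^ L, by rw [Nat.log_pow one_lt_two]⟩).comp (tendsto_add_atTop_nat 1)

lemma dyadicStep_antitone (hc : Antitone c) : Antitone (dyadicStep c) :=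
  fun _ _ h => hc (Nat.log_mono_right (by omega))

lemma dyadicStep_two_pow_sub_one (L : ℕ) : dyadicStep c (2 ^ L - 1) = c L := by
  rw [dyadicStep, Nat.sub_add_cancel Nat.one_le_two_pow, Nat.log_pow one_lt_two]

lemma tendsto_dyadicStep {l : ℝ} (hc : Tendsto c atTop (𝓝 l)) :
    Tendsto (dyadicStep c) atTop (𝓝 l) :=
  hc.comp tendsto_log_two_succ_atTop

lemma tendsto_two_pow_sub_one_atTop : Tendsto (fun L : ℕ => 2 ^ L - 1) atTop atTop :=
  (tendsto_sub_atTop_nat 1).comp (tendsto_pow_atTop_atTop_of_one_lt one_lt_two)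

lemma tendsto_of_tendsto_dyadicStep {l : ℝ} (h : Tendsto (dyadicStep c) atTop (𝓝 l)) :
    Tendsto c atTop (𝓝 l) := by
  simpa only [Function.comp_def, dyadicStep_two_pow_sub_one] using
    h.comp tendsto_two_pow_sub_one_atTop

lemma sum_dyadicBlock (c : ℕ → ℝ) (l : ℕ) :
    ∑ k ∈ Finset.Ico (2 ^ l - 1) (2 ^ (l + 1) - 1), dyadicStep c k = 2 ^ l * c l := by
  have hl : 1 ≤ 2 ^ l := Nat.one_le_two_pow
  have hpow : 2 ^ (l + 1) = 2 * 2 ^ l := by ring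
  have hconst : ∀ k ∈ Finset.Ico (2 ^ l - 1) (2 ^ (l + 1) - 1), dyadicStep c k = c l :=
      fun k hk => by
    rw [Finset.mem_Ico] at hk
    rw [dyadicStep, Nat.log_eq_of_pow_le_of_lt_pow (m := l) (by omega) (by omega)]
  rw [sum_congr rfl hconst, sum_const, Nat.card_Ico, nsmul_eq_mul,
    show 2 ^ (l + 1) - 1 - (2 ^ l - 1) = 2 ^ l by omega]
  push_cast
  ring

lemma sum_range_two_pow_sub_one_dyadicStep (c : ℕ → ℝ) (L : ℕ) :
    ∑ k ∈ range (2 ^ L - 1), dyadicStep c k = ∑ l ∈ range L, 2 ^ l * c l := by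
  induction L with
  | zero => simp
  | succ L ih =>
    have hmono : 2 ^ L - 1 ≤ 2 ^ (L + 1) - 1 :=
      Nat.sub_le_sub_right (Nat.pow_le_pow_right two_pos L.le_succ) 1
    rw [← sum_range_add_sum_Ico _ hmono, ih, sum_dyadicBlock, sum_range_succ]

lemma sum_range_le_sum_range_dyadicStep (hc : ∀ l, 0 ≤ c l) (n : ℕ) :
    ∑ l ∈ range (Nat.log 2 (n + 1)), 2 ^ l * c l ≤ ∑ k ∈ range n, dyadicStep c k := by
  rw [← sum_range_two_pow_sub_one_dyadicStep]
  refine sum_le_sum_of_subset_of_nonneg (range_subset_range.mpr ?_) fun k _ _ => hc _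
  have : 2 ^ Nat.log 2 (n + 1) ≤ n + 1 := Nat.pow_log_le_self 2 n.succ_ne_zero
  omega

lemma sum_range_dyadicStep_le_sum_range (hc : ∀ l, 0 ≤ c l) (n : ℕ) :
    ∑ k ∈ range n, dyadicStep c k ≤ ∑ l ∈ range (Nat.log 2 (n + 1) + 1), 2 ^ l * c l := by
  rw [← sum_range_two_pow_sub_one_dyadicStep]
  refine sum_le_sum_of_subset_of_nonneg (range_subset_range.mpr ?_) fun k _ _ => hc _
  have := Nat.lt_pow_succ_log_self one_lt_two (n + 1)
  omega

lemma not_summable_dyadicStep (hc : ∀ l, 0 ≤ c l)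
    (h : ¬ Tendsto (fun l => 2 ^ l * c l) atTop (𝓝 0)) :
    ¬ Summable (dyadicStep c) := by
  intro hsum
  refine h (Summable.tendsto_atTop_zero ?_)
  refine summable_of_sum_range_le (c := ∑' n, dyadicStep c n)
    (fun l => by have := hc l; positivity) fun L => ?_
  rw [← sum_range_two_pow_sub_one_dyadicStep]
  exact hsum.sum_le_tsum _ fun n _ => hc _

end DyadicStep

lemma two_pow_mul_half_pow (l : ℕ) : (2 : ℝ) ^ l * (1 / 2) ^ l = 1 := by
  rw [← mul_pow]
  norm_num

noncomputable def seqA : ℕ → ℝ := dyadicStep fun l => (1 / 2) ^ l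

noncomputable def bBlock (l : ℕ) : ℝ := (1 / 2) ^ 2 ^ (Nat.log 2 l + 1)

noncomputable def seqB : ℕ → ℝ := dyadicStep bBlock

lemma seqA_pos (n : ℕ) : 0 < seqA n := by
  simp only [seqA, dyadicStep]
  positivity

lemma bBlock_pos (l : ℕ) : 0 < bBlock l := by
  rw [bBlock]
  positivity

lemma seqB_pos (n : ℕ) : 0 < seqB n := bBlock_pos _

lemma bBlock_antitone : Antitone bBlock := fun _ _ h =>
  pow_le_pow_of_le_one (by norm_num) (by norm_num)
    (Nat.pow_le_pow_right two_pos (Nat.succ_le_succ (Nat.log_mono_right h)))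

lemma bBlock_le (l : ℕ) : bBlock l ≤ (1 / 2) ^ l :=
  pow_le_pow_of_le_one (by norm_num) (by norm_num) (Nat.lt_pow_succ_log_self one_lt_two l).le

lemma two_pow_mul_bBlock_two_pow_sub_one (m : ℕ) :
    2 ^ (2 ^ (m + 1) - 1) * bBlock (2 ^ (m + 1) - 1) = 1 / 2 := by
  have hpow : 2 ^ (m + 1) = 2 * 2 ^ m := by ring
  have hm : 1 ≤ 2 ^ m := Nat.one_le_two_pow
  have hlog : Nat.log 2 (2 ^ (m + 1) - 1) = m :=
    Nat.log_eq_of_pow_le_of_lt_pow (by omega) (by omega)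
  obtain ⟨j, hj⟩ : ∃ j, 2 ^ (m + 1) = j + 1 := ⟨2 ^ (m + 1) - 1, by omega⟩
  rw [bBlock, hlog, hj, Nat.add_sub_cancel, pow_succ, ← mul_assoc, two_pow_mul_half_pow, one_mul]

lemma not_tendsto_two_pow_mul_bBlock : ¬ Tendsto (fun l => 2 ^ l * bBlock l) atTop (𝓝 0) := by
  intro h
  have h' := h.comp (tendsto_two_pow_sub_one_atTop.comp (tendsto_add_atTop_nat 1))
  simp only [Function.comp_def, two_pow_mul_bBlock_two_pow_sub_one] at h'
  exact one_half_pos.ne' (tendsto_const_nhds_iff.mp h')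

lemma sum_two_pow_mul_bBlock_le_one {m : ℕ} (s : Finset ℕ) (hs : ∀ l ∈ s, Nat.log 2 l = m) :
    ∑ l ∈ s, 2 ^ l * bBlock l ≤ 1 := by
  have hsub : s ⊆ range (2 ^ (m + 1)) := fun l hl => by
    rw [Finset.mem_range, ← hs l hl]
    exact Nat.lt_pow_succ_log_self one_lt_two l
  calc ∑ l ∈ s, 2 ^ l * bBlock l = ∑ l ∈ s, 2 ^ l * (1 / 2 : ℝ) ^ 2 ^ (m + 1) :=
        sum_congr rfl fun l hl => by rw [bBlock, hs l hl]
    _ ≤ ∑ l ∈ range (2 ^ (m + 1)), 2 ^ l * (1 / 2 : ℝ) ^ 2 ^ (m + 1) :=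
        sum_le_sum_of_subset_of_nonneg hsub fun _ _ _ => by positivity
    _ = (2 ^ 2 ^ (m + 1) - 1) * (1 / 2 : ℝ) ^ 2 ^ (m + 1) := by
        rw [← sum_mul, geom_sum_eq (by norm_num)]
        norm_num
    _ ≤ 1 := by
        rw [sub_mul, two_pow_mul_half_pow]
        linarith [show (0 : ℝ) < (1 / 2) ^ 2 ^ (m + 1) by positivity]

lemma sum_range_succ_two_pow_mul_bBlock_le (L : ℕ) :
    ∑ l ∈ range (L + 1), 2 ^ l * bBlock l ≤ Nat.log 2 L + 1 := by
  have hmaps : ∀ l ∈ range (L + 1), Nat.log 2 l ∈ range (Nat.log 2 L + 1) := fun l hl => by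
    rw [Finset.mem_range] at hl ⊢
    exact Nat.lt_succ_of_le (Nat.log_mono_right (by omega))
  rw [← sum_fiberwise_of_maps_to hmaps]
  calc _ ≤ ∑ _m ∈ range (Nat.log 2 L + 1), (1 : ℝ) :=
        sum_le_sum fun m _ => sum_two_pow_mul_bBlock_le_one _ fun l hl => (mem_filter.mp hl).2
    _ = Nat.log 2 L + 1 := by simp

lemma tendsto_log_two_add_one_div_atTop :
    Tendsto (fun K : ℕ => ((Nat.log 2 K : ℝ) + 1) / K) atTop (𝓝 0) := by
  have hreal : Tendsto (fun x : ℝ => Real.logb 2 x / x + x⁻¹) atTop (𝓝 0) := by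
    simpa using
      (Real.tendsto_pow_logb_div_mul_add_atTop 1 0 1 one_ne_zero).add tendsto_inv_atTop_zero
  refine squeeze_zero' (Eventually.of_forall fun K => by positivity) ?_
    (hreal.comp tendsto_natCast_atTop_atTop)
  filter_upwards [eventually_gt_atTop 0] with K hK
  rw [Function.comp_apply, ← one_div, ← add_div]
  gcongr
  exact_mod_cast Real.natLog_le_logb K 2

lemma partialSumsLittleO_seqA_seqB : PartialSumsLittleO seqA seqB := by
  refine squeeze_zero' (Eventually.of_forall fun n => div_nonneg
      (sum_nonneg fun k _ => (seqB_pos k).le) (sum_nonneg fun k _ => (seqA_pos k).le)) ?_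
    (tendsto_log_two_add_one_div_atTop.comp tendsto_log_two_succ_atTop)
  filter_upwards [eventually_ge_atTop 1] with n hn
  set K := Nat.log 2 (n + 1)
  have hK : 0 < K := Nat.log_pos one_lt_two (by omega)
  have hA : (K : ℝ) ≤ ∑ k ∈ range n, seqA k := by
    have := sum_range_le_sum_range_dyadicStep (c := fun l => (1 / 2 : ℝ) ^ l)
      (fun l => by positivity) n
    simp only [two_pow_mul_half_pow, sum_const, card_range, nsmul_eq_mul, mul_one] at this
    exact this
  have hB : ∑ k ∈ range n, seqB k ≤ Nat.log 2 K + 1 :=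
    (sum_range_dyadicStep_le_sum_range (fun l => (bBlock_pos l).le) n).trans
      (sum_range_succ_two_pow_mul_bBlock_le K)
  exact div_le_div₀ (by positivity) hB (by exact_mod_cast hK) hA

lemma seqB_div_seqA : (fun n => seqB n / seqA n) = dyadicStep fun l => 2 ^ l * bBlock l := by
  funext n
  rw [seqB, seqA, dyadicStep, dyadicStep, one_div_pow, div_div_eq_mul_div, div_one, mul_comm]
  rfl

/-- There exist Waterman sequences `A`, `B` with `B` proper such that the
partial sums of `B` are `o` of those of `A`, while `bₙ/aₙ` does not tend to `0`. -/
theorem stmt5 :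
    ∃ a b : ℕ → ℝ, IsWaterman a ∧ IsProperWaterman b ∧
      PartialSumsLittleO a b ∧ ¬ Tendsto (fun n => b n / a n) atTop (nhds 0) := by
  have hA_antitone : Antitone seqA := dyadicStep_antitone fun _ _ h =>
    pow_le_pow_of_le_one (by norm_num) (by norm_num) h
  have hA_not_summable : ¬ Summable seqA := not_summable_dyadicStep (fun l => by positivity) <| by
    simpa only [two_pow_mul_half_pow, tendsto_const_nhds_iff] using one_ne_zero
  have hB_not_summable : ¬ Summable seqB :=
    not_summable_dyadicStep (fun l => (bBlock_pos l).le) not_tendsto_two_pow_mul_bBlock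
  have hB_tendsto : Tendsto seqB atTop (𝓝 0) := tendsto_dyadicStep <|
    squeeze_zero (fun l => (bBlock_pos l).le) bBlock_le
      (tendsto_pow_atTop_nhds_zero_of_lt_one (by norm_num) (by norm_num))
  refine ⟨seqA, seqB, ⟨hA_antitone, seqA_pos, hA_not_summable⟩,
    ⟨⟨dyadicStep_antitone bBlock_antitone, seqB_pos, hB_not_summable⟩, hB_tendsto⟩,
    partialSumsLittleO_seqA_seqB, ?_⟩
  rw [seqB_div_seqA]
  exact fun h => not_tendsto_two_pow_mul_bBlock (tendsto_of_tendsto_dyadicStep h)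
end

section
/- Let g : ℕ → (0,∞) be a function such that (g(n)) is nondecreasing, lim_{n→∞} g(n) = ∞, and (n/g(n)) does not tend to zero. Then Exh(φ_g) = {C ⊆ ℕ : lim_{n→∞} |C ∩ {1,…,n}|/g(n) = 0}. -/
open Filter Set
open scoped ENNReal

/-- For positive nondecreasing `g` tending to `∞` such that `n/g(n)` does
not tend to `0`, the ideal `Exh(φ_g)` consists exactly of the sets whose counting function
relative to `g` tends to `0`. -/
theorem stmt6 (g : ℕ → ℝ) (hpos : ∀ n, 0 < g n) (hmono : Monotone g)
    (htop : Tendsto g atTop atTop)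
    (hnz : ¬ Tendsto (fun n : ℕ => (n : ℝ) / g n) atTop (nhds 0)) :
    Exh g =
      {C : Set ℕ |
        Tendsto (fun n => ((C ∩ Set.Iic n).ncard : ℝ) / g n) atTop (nhds 0)} := by
  ext C
  simp only [Exh, Set.mem_setOf_eq]
  constructor
  · -- Exh → counting function tends to 0
    intro h
    rw [Metric.tendsto_atTop]
    intro ε hε
    have h2 := (ENNReal.tendsto_nhds_zero.mp h) (ENNReal.ofReal (ε / 4))
      (ENNReal.ofReal_pos.mpr (by positivity))
    obtain ⟨k, hk⟩ := h2.exists_forall_of_atTop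
    have hk' := hk k le_rfl
    have hterm : ∀ n, (((C \ Set.Iic k) ∩ Set.Iic n).ncard : ℝ) / g n ≤ ε / 4 := by
      intro n
      have := le_trans (le_iSup (fun n => ENNReal.ofReal
        ((((C \ Set.Iic k) ∩ Set.Iic n).ncard : ℝ) / g n)) n) hk'
      exact (ENNReal.ofReal_le_ofReal_iff (by positivity)).mp this
    obtain ⟨N, hN⟩ := (htop.eventually_ge_atTop ((4 * (k + 1)) / ε)).exists_forall_of_atTop
    refine ⟨N, fun n hn => ?_⟩
    have hgn := hpos n
    have hsub : C ∩ Set.Iic n ⊆ ((C \ Set.Iic k) ∩ Set.Iic n) ∪ Set.Iic k := by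
      intro x hx
      by_cases hxk : x ∈ Set.Iic k
      · exact Or.inr hxk
      · exact Or.inl ⟨⟨hx.1, hxk⟩, hx.2⟩
    have hfin1 : ((C \ Set.Iic k) ∩ Set.Iic n).Finite :=
      (Set.finite_Iic n).subset (Set.inter_subset_right)
    have hfin2 : (Set.Iic k : Set ℕ).Finite := Set.finite_Iic k
    have hcard : ((C ∩ Set.Iic n).ncard : ℝ) ≤
        (((C \ Set.Iic k) ∩ Set.Iic n).ncard : ℝ) + (k + 1) := by
      have h1 : (C ∩ Set.Iic n).ncard ≤
          (((C \ Set.Iic k) ∩ Set.Iic n) ∪ Set.Iic k).ncard :=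
        Set.ncard_le_ncard hsub (hfin1.union hfin2)
      have h2 : (((C \ Set.Iic k) ∩ Set.Iic n) ∪ Set.Iic k).ncard ≤
          ((C \ Set.Iic k) ∩ Set.Iic n).ncard + (Set.Iic k : Set ℕ).ncard :=
        Set.ncard_union_le _ _
      have h3 : (Set.Iic k : Set ℕ).ncard = k + 1 := by
        rw [← Finset.coe_Iic, Set.ncard_coe_finset, Nat.card_Iic]
      push_cast [h3] at *
      calc ((C ∩ Set.Iic n).ncard : ℝ) ≤ ((((C \ Set.Iic k) ∩ Set.Iic n) ∪ Set.Iic k).ncard : ℝ) := by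
            exact_mod_cast h1
        _ ≤ (((C \ Set.Iic k) ∩ Set.Iic n).ncard : ℝ) + (k + 1) := by exact_mod_cast h2
    have hg4 : ((k : ℝ) + 1) / g n ≤ ε / 4 := by
      rw [div_le_iff₀ hgn]
      have := hN n hn
      rw [div_le_iff₀ (by positivity : (0:ℝ) < ε)] at *
      nlinarith [hN n hn]
    have : ((C ∩ Set.Iic n).ncard : ℝ) / g n ≤ ε / 4 + ε / 4 := by
      have := hterm n
      calc ((C ∩ Set.Iic n).ncard : ℝ) / g n
          ≤ ((((C \ Set.Iic k) ∩ Set.Iic n).ncard : ℝ) + (k + 1)) / g n := by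
            gcongr
        _ = (((C \ Set.Iic k) ∩ Set.Iic n).ncard : ℝ) / g n + ((k : ℝ) + 1) / g n := by
            ring
        _ ≤ ε / 4 + ε / 4 := add_le_add (hterm n) hg4
    have hnn : (0:ℝ) ≤ ((C ∩ Set.Iic n).ncard : ℝ) / g n := by positivity
    rw [Real.dist_eq, sub_zero, abs_of_nonneg hnn]
    linarith
  · -- counting function tends to 0 → Exh
    intro h
    rw [ENNReal.tendsto_nhds_zero]
    intro ε hε
    set δ : ℝ := (min ε 1).toReal with hδdef
    have hne : min ε 1 ≠ ⊤ := ne_top_of_le_ne_top ENNReal.one_ne_top (min_le_right _ _)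
    have hδpos : 0 < δ := ENNReal.toReal_pos (lt_min hε zero_lt_one).ne' hne
    have hδle : ENNReal.ofReal δ ≤ ε := by
      rw [hδdef, ENNReal.ofReal_toReal hne]
      exact min_le_left _ _
    rw [Metric.tendsto_atTop] at h
    obtain ⟨N, hN⟩ := h δ hδpos
    filter_upwards [eventually_ge_atTop N] with k hkN
    refine le_trans ?_ hδle
    refine iSup_le fun n => ?_
    rcases le_or_gt n k with hnk | hnk
    · have : (C \ Set.Iic k) ∩ Set.Iic n = ∅ := by
        ext x
        simp only [Set.mem_inter_iff, Set.mem_diff, Set.mem_Iic, Set.mem_empty_iff_false,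
          iff_false]
        rintro ⟨⟨-, hxk⟩, hxn⟩
        exact hxk (hxn.trans hnk)
      simp [this]
    · have hsub : (C \ Set.Iic k) ∩ Set.Iic n ⊆ C ∩ Set.Iic n :=
        Set.inter_subset_inter_left _ Set.diff_subset
      have hcard : (((C \ Set.Iic k) ∩ Set.Iic n).ncard : ℝ) ≤ ((C ∩ Set.Iic n).ncard : ℝ) := by
        exact_mod_cast Set.ncard_le_ncard hsub ((Set.finite_Iic n).subset Set.inter_subset_right)
      have hd := hN n (hkN.trans hnk.le)
      rw [Real.dist_eq, sub_zero, abs_of_nonneg (div_nonneg (by positivity) (hpos n).le)] at hd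
      refine ENNReal.ofReal_le_ofReal ?_
      calc (((C \ Set.Iic k) ∩ Set.Iic n).ncard : ℝ) / g n
            ≤ ((C ∩ Set.Iic n).ncard : ℝ) / g n := by
              gcongr
              exact (hpos n).le
        _ ≤ δ := hd.le
end

section
/- Let g ∈ 𝒢 and M > 0. Any sequence (x_j) of functions in the Chanturia class V[g(n)] with ‖x_j‖_{φ_g} ≤ M for all j has a subsequence (x_{j_k}) pointwise convergent on [0,1] to some function x ∈ V[g(n)] satisfying v(x,n) ≤ M·g(n) for all n ∈ ℕ. -/
open Filter Set
open scoped ENNReal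

/-! ### Auxiliary machinery for the proof of `stmt7` -/

/-- Set of sums `∑ |x(t_i) - x(s_i)|` over `n`-tuples of nonoverlapping intervals
contained in `[0, s]`. -/
def sumsSet (x : ℝ → ℝ) (n : ℕ) (s : ℝ) : Set ℝ :=
  {r | ∃ p : (Fin n → ℝ) × (Fin n → ℝ), NonoverlappingFin p.1 p.2 ∧
    (∀ i, p.2 i ≤ s) ∧ r = ∑ i, |x (p.2 i) - x (p.1 i)|}

/-- Real-valued partial variation `v(x, n; [0,s])`. -/
noncomputable def rvar (x : ℝ → ℝ) (n : ℕ) (s : ℝ) : ℝ := sSup (sumsSet x n s)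

lemma sumsSet_zero_mem (x : ℝ → ℝ) (n : ℕ) {s : ℝ} (hs : 0 ≤ s) :
    (0 : ℝ) ∈ sumsSet x n s := by
  refine ⟨⟨fun _ => 0, fun _ => 0⟩, ⟨fun i => ⟨le_refl _, le_refl _, zero_le_one⟩, ?_⟩,
    fun i => hs, by simp⟩
  intro i j _
  simp

lemma sumsSet_nonneg {x : ℝ → ℝ} {n : ℕ} {s r : ℝ} (hr : r ∈ sumsSet x n s) : 0 ≤ r := by
  obtain ⟨p, -, -, rfl⟩ := hr
  exact Finset.sum_nonneg fun i _ => abs_nonneg _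

lemma sumsSet_le {x : ℝ → ℝ} {n : ℕ} {b : ℝ} (hb : modVar x n ≤ ENNReal.ofReal b)
    (hb0 : 0 ≤ b) {s r : ℝ} (hr : r ∈ sumsSet x n s) : r ≤ b := by
  obtain ⟨p, hp, -, rfl⟩ := hr
  have h1 : ENNReal.ofReal (∑ i, |x (p.2 i) - x (p.1 i)|) ≤ modVar x n :=
    le_iSup (fun q : {q : (Fin n → ℝ) × (Fin n → ℝ) // NonoverlappingFin q.1 q.2} =>
      ENNReal.ofReal (∑ i, |x (q.1.2 i) - x (q.1.1 i)|)) ⟨p, hp⟩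
  exact (ENNReal.ofReal_le_ofReal_iff hb0).mp (h1.trans hb)

lemma sumsSet_bddAbove {x : ℝ → ℝ} {n : ℕ} {b : ℝ} (hb : modVar x n ≤ ENNReal.ofReal b)
    (hb0 : 0 ≤ b) (s : ℝ) : BddAbove (sumsSet x n s) :=
  ⟨b, fun _ hr => sumsSet_le hb hb0 hr⟩

lemma rvar_nonneg {x : ℝ → ℝ} {n : ℕ} {b : ℝ} (hb : modVar x n ≤ ENNReal.ofReal b)
    (hb0 : 0 ≤ b) {s : ℝ} (hs : 0 ≤ s) : 0 ≤ rvar x n s :=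
  le_csSup (sumsSet_bddAbove hb hb0 s) (sumsSet_zero_mem x n hs)

lemma rvar_le {x : ℝ → ℝ} {n : ℕ} {b : ℝ} (hb : modVar x n ≤ ENNReal.ofReal b)
    (hb0 : 0 ≤ b) {s : ℝ} (hs : 0 ≤ s) : rvar x n s ≤ b :=
  csSup_le ⟨0, sumsSet_zero_mem x n hs⟩ fun _ hr => sumsSet_le hb hb0 hr

lemma rvar_mono {x : ℝ → ℝ} {n : ℕ} {b : ℝ} (hb : modVar x n ≤ ENNReal.ofReal b)
    (hb0 : 0 ≤ b) {s s' : ℝ} (hs : 0 ≤ s) (hss' : s ≤ s') : rvar x n s ≤ rvar x n s' := by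
  refine csSup_le_csSup (sumsSet_bddAbove hb hb0 s') ⟨0, sumsSet_zero_mem x n hs⟩ ?_
  rintro r ⟨p, hp, hps, rfl⟩
  exact ⟨p, hp, fun i => (hps i).trans hss', rfl⟩

/-- Key "replace the smallest interval" inequality. -/
lemma rvar_key {x : ℝ → ℝ} {n : ℕ} (hn : 0 < n) {b : ℝ} (hb0 : 0 ≤ b)
    (hb : modVar x n ≤ ENNReal.ofReal b) {s t : ℝ} (h0s : 0 ≤ s) (hst : s ≤ t)
    (ht1 : t ≤ 1) : |x t - x s| ≤ rvar x n t - rvar x n s + b / n := by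
  classical
  have H : rvar x n s ≤ rvar x n t + b / n - |x t - x s| := by
    refine csSup_le ⟨0, sumsSet_zero_mem x n h0s⟩ ?_
    rintro r ⟨p, hp, hps, rfl⟩
    obtain ⟨i₀, -, hi₀⟩ := Finset.exists_min_image Finset.univ
      (fun i => |x (p.2 i) - x (p.1 i)|) ⟨⟨0, hn⟩, Finset.mem_univ _⟩
    set m := |x (p.2 i₀) - x (p.1 i₀)| with hm
    have hmsum : (n : ℝ) * m ≤ ∑ i, |x (p.2 i) - x (p.1 i)| := by
      have := Finset.card_nsmul_le_sum Finset.univ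
        (fun i => |x (p.2 i) - x (p.1 i)|) m (fun i _ => hi₀ i (Finset.mem_univ i))
      simpa [nsmul_eq_mul] using this
    have hrb : ∑ i, |x (p.2 i) - x (p.1 i)| ≤ b := sumsSet_le hb hb0 ⟨p, hp, hps, rfl⟩
    have hmb : m ≤ b / n := by
      rw [le_div_iff₀ (by exact_mod_cast hn : (0:ℝ) < n)]
      nlinarith
    set a' := Function.update p.1 i₀ s with ha'
    set c' := Function.update p.2 i₀ t with hc'
    have hIoo : ∀ i, i ≠ i₀ → Ioo (a' i) (c' i) = Ioo (p.1 i) (p.2 i) := by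
      intro i hi
      rw [ha', hc', Function.update_of_ne hi, Function.update_of_ne hi]
    have hmem' : (∑ i, |x (c' i) - x (a' i)|) ∈ sumsSet x n t := by
      refine ⟨⟨a', c'⟩, ⟨?_, ?_⟩, ?_, rfl⟩
      · intro i
        by_cases h : i = i₀
        · subst h
          simp only [ha', hc', Function.update_self]
          exact ⟨h0s, hst, ht1⟩
        · simp only [ha', hc', Function.update_of_ne h]
          exact hp.1 i
      · intro i j hij
        have hdisj : ∀ l, l ≠ i₀ → Disjoint (Ioo s t) (Ioo (p.1 l) (p.2 l)) := by
          intro l hl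
          rw [Set.disjoint_left]
          rintro u ⟨hu1, -⟩ ⟨-, hu4⟩
          exact absurd (hu4.trans_le (hps l)) (not_lt.mpr hu1.le)
        by_cases hi : i = i₀
        · subst hi
          rw [hIoo j hij.symm]
          simp only [ha', hc', Function.update_self]
          exact hdisj j hij.symm
        · by_cases hj : j = i₀
          · subst hj
            rw [hIoo i hi]
            simp only [ha', hc', Function.update_self]
            exact (hdisj i hi).symm
          · rw [hIoo i hi, hIoo j hj]
            exact hp.2 hij
      · intro i
        by_cases h : i = i₀
        · subst h; simp only [hc', Function.update_self]; exact le_refl t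
        · simp only [hc', Function.update_of_ne h]
          exact (hps i).trans hst
    have hsum' : ∑ i, |x (c' i) - x (a' i)|
        = |x t - x s| + (∑ i, |x (p.2 i) - x (p.1 i)| - m) := by
      rw [← Finset.sum_erase_add _ _ (Finset.mem_univ i₀),
        ← Finset.sum_erase_add _ (fun i => |x (p.2 i) - x (p.1 i)|) (Finset.mem_univ i₀)]
      have he : ∀ i ∈ Finset.univ.erase i₀,
          |x (c' i) - x (a' i)| = |x (p.2 i) - x (p.1 i)| := by
        intro i hi
        rw [ha', hc', Function.update_of_ne (Finset.ne_of_mem_erase hi),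
          Function.update_of_ne (Finset.ne_of_mem_erase hi)]
      rw [Finset.sum_congr rfl he]
      simp only [ha', hc', Function.update_self, hm]
      ring
    have hle : ∑ i, |x (c' i) - x (a' i)| ≤ rvar x n t :=
      le_csSup (sumsSet_bddAbove hb hb0 t) hmem'
    rw [hsum'] at hle
    linarith
  linarith

/-- Diagonal extraction: a sequence of uniformly-per-coordinate-bounded families over a
countable index set has a subsequence converging in every coordinate. -/
lemma diag_extract {ι : Type*} [Countable ι] (f : ℕ → ι → ℝ) (B : ι → ℝ)
    (hf : ∀ j i, |f j i| ≤ B i) :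
    ∃ φ : ℕ → ℕ, StrictMono φ ∧ ∀ i, ∃ L : ℝ,
      Tendsto (fun k => f (φ k) i) atTop (nhds L) := by
  let F : ℕ → ∀ i : ι, Set.Icc (-(B i)) (B i) := fun j i =>
    ⟨f j i, by
      have := abs_le.mp (hf j i)
      exact ⟨this.1, this.2⟩⟩
  obtain ⟨a, φ, hφ, ha⟩ := CompactSpace.tendsto_subseq F
  refine ⟨φ, hφ, fun i => ⟨(a i : ℝ), ?_⟩⟩
  have h1 : Tendsto (fun k => F (φ k) i) atTop (nhds (a i)) := by
    have := tendsto_pi_nhds.mp ha i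
    exact this
  exact (continuous_subtype_val.tendsto (a i)).comp h1
/-- Helly-type selection principle for Chanturia classes: a sequence in
`V[g(n)]` bounded by `M` has a subsequence converging pointwise on `[0,1]` to some
`x ∈ V[g(n)]` with `v(x,n) ≤ M·g(n)` for all `n`. -/
theorem stmt7 (g : ℕ → ℝ) (hg : MemG g) (M : ℝ) (hM : 0 < M)
    (x : ℕ → ℝ → ℝ) (hmem : ∀ j, MemChanturia g (x j))
    (hbdd : ∀ j, eNormChan g (x j) ≤ ENNReal.ofReal M) :
    ∃ φ : ℕ → ℕ, StrictMono φ ∧ ∃ y : ℝ → ℝ, MemChanturia g y ∧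
      (∀ t ∈ Set.Icc (0 : ℝ) 1, Tendsto (fun k => x (φ k) t) atTop (nhds (y t))) ∧
      ∀ n, modVar y n ≤ ENNReal.ofReal (M * g n) := by
  classical
  obtain ⟨hgpos, hgmono, hgtop, hrmono, hrtop⟩ := hg
  have hMg0 : ∀ n, 0 ≤ M * g n := fun n => (mul_pos hM (hgpos n)).le
  -- modulus of variation bound
  have hv : ∀ j n, modVar (x j) n ≤ ENNReal.ofReal (M * g n) := by
    intro j n
    have h1 : modVar (x j) n / ENNReal.ofReal (g n) ≤ ENNReal.ofReal M :=
      ((le_iSup (fun n => modVar (x j) n / ENNReal.ofReal (g n)) n).trans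
        le_add_self).trans (hbdd j)
    have hg0 : ENNReal.ofReal (g n) ≠ 0 := (ENNReal.ofReal_pos.mpr (hgpos n)).ne'
    have h2 := (ENNReal.div_le_iff_le_mul (Or.inl hg0)
      (Or.inl ENNReal.ofReal_ne_top)).mp h1
    rwa [← ENNReal.ofReal_mul hM.le] at h2
  -- value at 0 bound
  have hx0 : ∀ j, |x j 0| ≤ M := fun j =>
    (ENNReal.ofReal_le_ofReal_iff hM.le).mp (le_self_add.trans (hbdd j))
  -- uniform sup bound
  set C : ℝ := M + M * g 1 with hCdef
  have hsup : ∀ j, ∀ t ∈ Set.Icc (0:ℝ) 1, |x j t| ≤ C := by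
    intro j t ht
    have hosc : |x j t - x j 0| ≤ M * g 1 := by
      refine sumsSet_le (hv j 1) (hMg0 1) (s := 1) ⟨⟨fun _ => 0, fun _ => t⟩,
        ⟨fun i => ⟨le_refl _, ht.1, ht.2⟩, Subsingleton.pairwise⟩, fun i => ht.2, by simp⟩
    have h3 := abs_sub_abs_le_abs_sub (x j t) (x j 0)
    have h4 := hx0 j
    rw [hCdef]; linarith
  -- Stage 1: extract convergence of partial variations at rational points
  set proj : ℚ → ℝ := fun q => max 0 (min (q:ℝ) 1) with hprojdef
  have hproj0 : ∀ q, 0 ≤ proj q := fun q => le_max_left _ _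
  have hproj1 : ∀ q, proj q ≤ 1 := fun q => max_le zero_le_one (min_le_right _ _)
  have hproj_eq : ∀ q : ℚ, 0 ≤ (q:ℝ) → (q:ℝ) ≤ 1 → proj q = (q:ℝ) := by
    intro q h0 h1
    rw [hprojdef]; simp only [min_eq_left h1, max_eq_right h0]
  have hproj_mono : ∀ q q' : ℚ, (q:ℝ) ≤ (q':ℝ) → proj q ≤ proj q' := by
    intro q q' h
    exact max_le_max le_rfl (min_le_min h le_rfl)
  obtain ⟨φ₁, hφ₁, hφ₁conv⟩ := diag_extract
    (fun (j : ℕ) (p : ℕ × ℚ) => rvar (x j) p.1 (proj p.2)) (fun p => M * g p.1)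
    (fun j p => by
      rw [abs_of_nonneg (rvar_nonneg (hv j p.1) (hMg0 p.1) (hproj0 p.2))]
      exact rvar_le (hv j p.1) (hMg0 p.1) (hproj0 p.2))
  choose W hW using hφ₁conv
  have hWmono : ∀ n : ℕ, ∀ q q' : ℚ, (q:ℝ) ≤ (q':ℝ) → W (n, q) ≤ W (n, q') := by
    intro n q q' h
    exact le_of_tendsto_of_tendsto' (hW (n, q)) (hW (n, q'))
      (fun k => rvar_mono (hv (φ₁ k) n) (hMg0 n) (hproj0 q) (hproj_mono q q' h))
  have hWle : ∀ n (q : ℚ), W (n, q) ≤ M * g n := fun n q =>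
    le_of_tendsto' (hW (n, q)) fun k => rvar_le (hv (φ₁ k) n) (hMg0 n) (hproj0 q)
  -- Jump sets
  set LS : ℕ → ℝ → Set ℝ := fun n t =>
    (fun q : ℚ => W (n, q)) '' {q : ℚ | 0 ≤ (q:ℝ) ∧ (q:ℝ) < t} with hLSdef
  set RS : ℕ → ℝ → Set ℝ := fun n t =>
    (fun q : ℚ => W (n, q)) '' {q : ℚ | t < (q:ℝ) ∧ (q:ℝ) ≤ 1} with hRSdef
  set Bad : ℕ → Set ℝ := fun n =>
    {t | t ∈ Set.Ioo (0:ℝ) 1 ∧ sSup (LS n t) < sInf (RS n t)} with hBaddef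
  have hLSne : ∀ n, ∀ t ∈ Set.Ioo (0:ℝ) 1, (LS n t).Nonempty := by
    intro n t ht
    obtain ⟨q, hq1, hq2⟩ := exists_rat_btwn ht.1
    exact ⟨W (n, q), ⟨q, ⟨hq1.le, hq2⟩, rfl⟩⟩
  have hRSne : ∀ n, ∀ t ∈ Set.Ioo (0:ℝ) 1, (RS n t).Nonempty := by
    intro n t ht
    obtain ⟨q, hq1, hq2⟩ := exists_rat_btwn ht.2
    exact ⟨W (n, q), ⟨q, ⟨hq1, hq2.le⟩, rfl⟩⟩
  have hLSbdd : ∀ n t, BddAbove (LS n t) := by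
    intro n t
    refine ⟨M * g n, ?_⟩
    rintro _ ⟨q, -, rfl⟩
    exact hWle n q
  have hRSbdd : ∀ n t, BddBelow (RS n t) := by
    intro n t
    refine ⟨0, ?_⟩
    rintro _ ⟨q, -, rfl⟩
    exact le_of_tendsto_of_tendsto' tendsto_const_nhds (hW (n, q))
      (fun k => rvar_nonneg (hv (φ₁ k) n) (hMg0 n) (hproj0 q))
  -- countability of bad sets
  have hBadc : ∀ n, (Bad n).Countable := by
    intro n
    have hex : ∀ t ∈ Bad n, ∃ q : ℚ, sSup (LS n t) < (q:ℝ) ∧ (q:ℝ) < sInf (RS n t) :=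
      fun t ht => exists_rat_btwn ht.2
    choose! F hF using hex
    have hsep : ∀ t t', t ∈ Bad n → t' ∈ Bad n → t < t' → ((F t : ℝ) < (F t' : ℝ)) := by
      intro t t' ht ht' hlt
      obtain ⟨q, hq1, hq2⟩ := exists_rat_btwn hlt
      have h1 : sInf (RS n t) ≤ W (n, q) :=
        csInf_le (hRSbdd n t) ⟨q, ⟨hq1, hq2.le.trans ht'.1.2.le⟩, rfl⟩
      have h2 : W (n, q) ≤ sSup (LS n t') :=
        le_csSup (hLSbdd n t') ⟨q, ⟨(ht.1.1.trans hq1).le, hq2⟩, rfl⟩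
      exact ((hF t ht).2.trans_le (h1.trans h2)).trans (hF t' ht').1
    have hinj : Set.InjOn F (Bad n) := by
      intro t ht t' ht' heq
      by_contra hne
      rcases lt_or_gt_of_ne hne with hlt | hlt
      · have := hsep t t' ht ht' hlt
        rw [heq] at this
        exact lt_irrefl _ this
      · have := hsep t' t ht' ht hlt
        rw [heq] at this
        exact lt_irrefl _ this
    refine Set.countable_iff_exists_injOn.mpr
      ⟨fun t => (Denumerable.eqv ℚ) (F t), ?_⟩
    exact ((Denumerable.eqv ℚ).injective.injOn).comp hinj (Set.mapsTo_univ _ _)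
  -- the countable exceptional set
  set S : Set ℝ := ⋃ n, Bad n with hSdef
  set D : Set ℝ := (Set.Icc 0 1 ∩ Set.range ((↑) : ℚ → ℝ)) ∪ S with hDdef
  have hDc : D.Countable := by
    refine Set.Countable.union ?_ (Set.countable_iUnion hBadc)
    exact ((Set.countable_range ((↑) : ℚ → ℝ)).mono Set.inter_subset_right)
  have hDsub : D ⊆ Set.Icc (0:ℝ) 1 := by
    rintro t (⟨ht, -⟩ | ht)
    · exact ht
    · obtain ⟨s, ⟨n, rfl⟩, hts⟩ := ht
      exact ⟨hts.1.1.le, hts.1.2.le⟩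
  have hD0 : (0:ℝ) ∈ D := Or.inl ⟨⟨le_refl _, zero_le_one⟩, ⟨0, by norm_num⟩⟩
  obtain ⟨e, he⟩ := hDc.exists_eq_range ⟨0, hD0⟩
  -- Stage 2: extract pointwise convergence on D
  obtain ⟨φ₂, hφ₂, hφ₂conv⟩ := diag_extract
    (fun (k : ℕ) (m : ℕ) => x (φ₁ k) (e m)) (fun _ => C)
    (fun k m => hsup (φ₁ k) (e m) (hDsub (by rw [he]; exact Set.mem_range_self m)))
  set φ : ℕ → ℕ := φ₁ ∘ φ₂ with hφdef
  have hφ : StrictMono φ := hφ₁.comp hφ₂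
  have hconvD : ∀ d ∈ D, ∃ L : ℝ, Tendsto (fun k => x (φ k) d) atTop (nhds L) := by
    intro d hd
    rw [he] at hd
    obtain ⟨m, rfl⟩ := hd
    obtain ⟨L, hL⟩ := hφ₂conv m
    exact ⟨L, hL⟩
  have hrconv : ∀ (n : ℕ) (q : ℚ),
      Tendsto (fun k => rvar (x (φ k)) n (proj q)) atTop (nhds (W (n, q))) :=
    fun n q => (hW (n, q)).comp hφ₂.tendsto_atTop
  -- the ratio tends to zero
  have hratio0 : Tendsto (fun n : ℕ => M * g n / n) atTop (nhds 0) := by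
    have h1 : Tendsto (fun n : ℕ => ((n:ℝ) / g n)⁻¹) atTop (nhds 0) :=
      hrtop.inv_tendsto_atTop
    have h2 : Tendsto (fun n : ℕ => g n / n) atTop (nhds 0) := by
      refine h1.congr (fun n => ?_)
      rw [inv_div]
    have h3 := h2.const_mul M
    rw [mul_zero] at h3
    refine h3.congr (fun n => ?_)
    rw [mul_div_assoc]
  -- Cauchy at every point of [0,1]
  have hcauchy : ∀ t ∈ Set.Icc (0:ℝ) 1,
      ∃ L : ℝ, Tendsto (fun k => x (φ k) t) atTop (nhds L) := by
    intro t ht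
    by_cases hD : t ∈ D
    · exact hconvD t hD
    · have ht0 : 0 < t := by
        rcases eq_or_lt_of_le ht.1 with h | h
        · exact absurd (Or.inl ⟨ht, ⟨0, by exact_mod_cast h⟩⟩ : t ∈ D) hD
        · exact h
      have ht1 : t < 1 := by
        rcases eq_or_lt_of_le ht.2 with h | h
        · exact absurd (Or.inl ⟨ht, ⟨1, by exact_mod_cast h.symm⟩⟩ : t ∈ D) hD
        · exact h
      have htIoo : t ∈ Set.Ioo (0:ℝ) 1 := ⟨ht0, ht1⟩
      refine cauchySeq_tendsto_of_complete ?_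
      rw [Metric.cauchySeq_iff]
      intro ε hε
      -- choose n
      obtain ⟨n, hn1, hnε⟩ : ∃ n : ℕ, 1 ≤ n ∧ M * g n / n < ε / 16 := by
        have h1 := (hratio0.eventually (gt_mem_nhds (by linarith : (0:ℝ) < ε/16))).and
          (eventually_ge_atTop 1)
        obtain ⟨n, hn⟩ := h1.exists
        exact ⟨n, hn.2, hn.1⟩
      -- t is not bad at level n
      have hnotbad : ¬ sSup (LS n t) < sInf (RS n t) := by
        intro h
        exact hD (Or.inr (Set.mem_iUnion.mpr ⟨n, ⟨htIoo, h⟩⟩))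
      -- pick good sandwich rationals
      obtain ⟨wl, ⟨ql, hql, rfl⟩, hwl⟩ :=
        exists_lt_of_lt_csSup (hLSne n t htIoo)
          (by linarith [not_lt.mp hnotbad] :
            sInf (RS n t) - ε/16 < sSup (LS n t))
      obtain ⟨wr, ⟨qr, hqr, rfl⟩, hwr⟩ :=
        exists_lt_of_csInf_lt (hRSne n t htIoo)
          (lt_add_of_pos_right _ (by linarith : (0:ℝ) < ε/16))
      -- gap bound
      have hgap : W (n, qr) - W (n, ql) < ε / 8 := by linarith
      have hql0 : 0 ≤ (ql:ℝ) := hql.1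
      have hql1 : (ql:ℝ) ≤ 1 := (hql.2.trans ht1).le
      have hqr0 : 0 ≤ (qr:ℝ) := (ht0.trans hqr.1).le
      have hqr1 : (qr:ℝ) ≤ 1 := hqr.2
      have hrl := hrconv n ql
      have hrr := hrconv n qr
      rw [hproj_eq ql hql0 hql1] at hrl
      rw [hproj_eq qr hqr0 hqr1] at hrr
      obtain ⟨Nl, hNl⟩ := (Metric.tendsto_atTop.mp hrl) (ε/16) (by linarith)
      obtain ⟨Nr, hNr⟩ := (Metric.tendsto_atTop.mp hrr) (ε/16) (by linarith)
      obtain ⟨Ls, hLs⟩ := hconvD (ql:ℝ) (Or.inl ⟨⟨hql0, hql1⟩, ⟨ql, rfl⟩⟩)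
      obtain ⟨Ns, hNs⟩ := (Metric.cauchySeq_iff.mp hLs.cauchySeq) (ε/16) (by linarith)
      refine ⟨max (max Nl Nr) Ns, ?_⟩
      intro k hk l hl
      have hkl : Nl ≤ k := le_trans (le_trans (le_max_left _ _) (le_max_left _ _)) hk
      have hkr : Nr ≤ k := le_trans (le_trans (le_max_right _ _) (le_max_left _ _)) hk
      have hks : Ns ≤ k := le_trans (le_max_right _ _) hk
      have hll : Nl ≤ l := le_trans (le_trans (le_max_left _ _) (le_max_left _ _)) hl
      have hlr : Nr ≤ l := le_trans (le_trans (le_max_right _ _) (le_max_left _ _)) hl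
      have hls : Ns ≤ l := le_trans (le_max_right _ _) hl
      -- key inequality for an arbitrary index
      have hkey : ∀ k : ℕ, |x (φ k) t - x (φ k) ql| ≤
          rvar (x (φ k)) n (qr:ℝ) - rvar (x (φ k)) n (ql:ℝ) + M * g n / n := by
        intro k
        have h1 := rvar_key (lt_of_lt_of_le one_pos (by exact_mod_cast hn1))
          (hMg0 n) (hv (φ k) n) hql0 hql.2.le ht.2
        have h2 : rvar (x (φ k)) n t ≤ rvar (x (φ k)) n (qr:ℝ) :=
          rvar_mono (hv (φ k) n) (hMg0 n) (le_trans hql0 hql.2.le) hqr.1.le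
        linarith
      have hbk := hkey k
      have hbl := hkey l
      have hrlk := hNl k hkl
      have hrll := hNl l hll
      have hrrk := hNr k hkr
      have hrrl := hNr l hlr
      have hsd := hNs k hks l hls
      rw [Real.dist_eq] at hrlk hrll hrrk hrrl hsd ⊢
      have e1 := abs_lt.mp hrlk
      have e2 := abs_lt.mp hrll
      have e3 := abs_lt.mp hrrk
      have e4 := abs_lt.mp hrrl
      have e5 := abs_lt.mp hsd
      have tri : |x (φ k) t - x (φ l) t| ≤
          |x (φ k) t - x (φ k) ql| + |x (φ k) ql - x (φ l) ql| +
          |x (φ l) ql - x (φ l) t| := by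
        have := abs_add_le (x (φ k) t - x (φ k) ql) (x (φ k) ql - x (φ l) ql)
        have h2 := abs_add_le (x (φ k) t - x (φ l) ql) (x (φ l) ql - x (φ l) t)
        have h3 : x (φ k) t - x (φ l) t =
            (x (φ k) t - x (φ l) ql) + (x (φ l) ql - x (φ l) t) := by ring
        have h4 : x (φ k) t - x (φ l) ql =
            (x (φ k) t - x (φ k) ql) + (x (φ k) ql - x (φ l) ql) := by ring
        rw [h3, h4] at *
        calc |(x (φ k) t - x (φ k) ql) + (x (φ k) ql - x (φ l) ql) +
              (x (φ l) ql - x (φ l) t)|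
            ≤ |(x (φ k) t - x (φ k) ql) + (x (φ k) ql - x (φ l) ql)| +
              |x (φ l) ql - x (φ l) t| := abs_add_le _ _
          _ ≤ _ := by
              have := abs_add_le (x (φ k) t - x (φ k) ql) (x (φ k) ql - x (φ l) ql)
              linarith
      have hbl' : |x (φ l) ql - x (φ l) t| ≤
          rvar (x (φ l)) n (qr:ℝ) - rvar (x (φ l)) n (ql:ℝ) + M * g n / n := by
        rw [abs_sub_comm]; exact hbl
      linarith
  -- define the limit function
  choose! Y hY using hcauchy
  refine ⟨φ, hφ, Y, ?_, hY, ?_⟩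
  · -- MemChanturia g Y
    constructor
    · refine ⟨C, fun t htt => ?_⟩
      exact le_of_tendsto' (hY t htt).abs (fun k => hsup (φ k) t htt)
    · refine ⟨M, hM, fun n => ?_⟩
      refine iSup_le ?_
      rintro ⟨p, hp⟩
      have hm1 : ∀ i, p.1 i ∈ Set.Icc (0:ℝ) 1 :=
        fun i => ⟨(hp.1 i).1, (hp.1 i).2.1.trans (hp.1 i).2.2⟩
      have hm2 : ∀ i, p.2 i ∈ Set.Icc (0:ℝ) 1 :=
        fun i => ⟨(hp.1 i).1.trans (hp.1 i).2.1, (hp.1 i).2.2⟩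
      have hts : Tendsto (fun k => ∑ i, |x (φ k) (p.2 i) - x (φ k) (p.1 i)|) atTop
          (nhds (∑ i, |Y (p.2 i) - Y (p.1 i)|)) :=
        tendsto_finset_sum _ fun i _ =>
          ((hY (p.2 i) (hm2 i)).sub (hY (p.1 i) (hm1 i))).abs
      have hle : ∑ i, |Y (p.2 i) - Y (p.1 i)| ≤ M * g n :=
        le_of_tendsto' hts fun k =>
          sumsSet_le (hv (φ k) n) (hMg0 n) (s := 1)
            ⟨p, hp, fun i => (hp.1 i).2.2, rfl⟩
      exact ENNReal.ofReal_le_ofReal hle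
  · -- modVar bound (same computation)
    intro n
    refine iSup_le ?_
    rintro ⟨p, hp⟩
    have hm1 : ∀ i, p.1 i ∈ Set.Icc (0:ℝ) 1 :=
      fun i => ⟨(hp.1 i).1, (hp.1 i).2.1.trans (hp.1 i).2.2⟩
    have hm2 : ∀ i, p.2 i ∈ Set.Icc (0:ℝ) 1 :=
      fun i => ⟨(hp.1 i).1.trans (hp.1 i).2.1, (hp.1 i).2.2⟩
    have hts : Tendsto (fun k => ∑ i, |x (φ k) (p.2 i) - x (φ k) (p.1 i)|) atTop
        (nhds (∑ i, |Y (p.2 i) - Y (p.1 i)|)) :=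
      tendsto_finset_sum _ fun i _ =>
        ((hY (p.2 i) (hm2 i)).sub (hY (p.1 i) (hm1 i))).abs
    have hle : ∑ i, |Y (p.2 i) - Y (p.1 i)| ≤ M * g n :=
      le_of_tendsto' hts fun k =>
        sumsSet_le (hv (φ k) n) (hMg0 n) (s := 1)
          ⟨p, hp, fun i => (hp.1 i).2.2, rfl⟩
    exact ENNReal.ofReal_le_ofReal hle
end
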